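/- arXiv:2403.14225 — 4 statements merged into one kernel-verified Lean document; each statement's English description precedes it below -/
import Mathlib

section
/- Let T : ℝ → ℝ be the tent map T(x) = 2·max(0, x) − 4·max(0, x − 1/2) + 2·max(0, x − 1), and for l ∈ ℕ let T^{∘l} denote its l-fold composition. Then for every R ∈ ℕ and every x ∈ [0,1], | x − Σ_{l=1}^{R} T^{∘l}(x)/4^l − x² | ≤ 2^{−2R−2}. -/
/-- The tent map `T(x) = 2·max(0,x) − 4·max(0,x−1/2) + 2·max(0,x−1)`. -/
noncomputable def tentMap (x : ℝ) : ℝ :=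
  2 * max 0 x - 4 * max 0 (x - 1 / 2) + 2 * max 0 (x - 1)

lemma tentMap_mem {x : ℝ} (hx : x ∈ Set.Icc (0 : ℝ) 1) :
    tentMap x ∈ Set.Icc (0 : ℝ) 1 := by
  obtain ⟨h0, h1⟩ := hx
  unfold tentMap
  rcases le_total x (1 / 2) with h | h
  · rw [max_eq_right h0, max_eq_left (by linarith), max_eq_left (by linarith)]
    constructor <;> nlinarith
  · rw [max_eq_right h0, max_eq_right (by linarith), max_eq_left (by linarith)]
    constructor <;> nlinarith

lemma tentMap_key {x : ℝ} (hx : x ∈ Set.Icc (0 : ℝ) 1) :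
    x - x ^ 2 = tentMap x / 4 + (tentMap x - (tentMap x) ^ 2) / 4 := by
  obtain ⟨h0, h1⟩ := hx
  unfold tentMap
  rcases le_total x (1 / 2) with h | h
  · rw [max_eq_right h0, max_eq_left (by linarith), max_eq_left (by linarith)]
    ring
  · rw [max_eq_right h0, max_eq_right (by linarith), max_eq_left (by linarith)]
    ring

lemma tentMap_iter_mem {x : ℝ} (hx : x ∈ Set.Icc (0 : ℝ) 1) (n : ℕ) :
    tentMap^[n] x ∈ Set.Icc (0 : ℝ) 1 := by
  induction n with
  | zero => simpa using hx
  | succ n ih => rw [Function.iterate_succ_apply']; exact tentMap_mem ih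

lemma tentMap_sum_eq (R : ℕ) (x : ℝ) (hx : x ∈ Set.Icc (0 : ℝ) 1) :
    x - (∑ l ∈ Finset.Icc 1 R, tentMap^[l] x / 4 ^ l) - x ^ 2 =
      (tentMap^[R] x - (tentMap^[R] x) ^ 2) / 4 ^ R := by
  induction R with
  | zero => simp
  | succ R ih =>
    rw [Finset.sum_Icc_succ_top (by omega)]
    have hy := tentMap_iter_mem hx R
    have hkey := tentMap_key hy
    rw [Function.iterate_succ_apply']
    have h4 : (4 : ℝ) ^ R ≠ 0 := by positivity
    field_simp at ih hkey ⊢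
    linear_combination 4 * ih + hkey

/-- For every R ∈ ℕ and every x ∈ [0,1],
`| x − Σ_{l=1}^{R} T^{∘l}(x)/4^l − x² | ≤ 2^{−2R−2}`. -/
theorem tent_map_square_approximation (R : ℕ) (x : ℝ) (hx : x ∈ Set.Icc (0 : ℝ) 1) :
    |x - (∑ l ∈ Finset.Icc 1 R, tentMap^[l] x / 4 ^ l) - x ^ 2| ≤ 1 / 2 ^ (2 * R + 2) := by
  rw [tentMap_sum_eq R x hx]
  obtain ⟨h0, h1⟩ := tentMap_iter_mem hx R
  set y := tentMap^[R] x
  have hb : |y - y ^ 2| ≤ 1 / 4 := by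
    rw [abs_le]; constructor <;> nlinarith [sq_nonneg (y - 1/2), sq_nonneg y]
  rw [abs_div, abs_of_pos (by positivity : (0:ℝ) < 4 ^ R)]
  rw [div_le_iff₀ (by positivity)]
  have : (1 : ℝ) / 2 ^ (2 * R + 2) * 4 ^ R = 1 / 4 := by
    rw [pow_add, pow_mul]
    norm_num
  rw [this]
  exact hb
end

section
/- Let ν ∈ [0,1), a ≥ 1 and d ∈ ℕ with d ≥ 2. There exist positive constants c and c' (depending only on a, ν and d, not on R) such that for every sufficiently large R ∈ ℕ there exists a network f ∈ F_{ρν}^{DNN}(R⌈log₂ d⌉, 24d, c) (with input dimension d) satisfying |f(x) − ∏_{i=1}^d x^{(i)}| ≤ c'·4^{−R} for all x ∈ [−a, a]^d. -/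
noncomputable section

/-- Leaky-ReLU activation. -/
def lrelu (ν x : ℝ) : ℝ := max x (ν * x)

/-- A fully connected Leaky-ReLU network with input dimension `d` and hidden width `r`:
a first affine layer `ℝ^d → ℝ^r`, a list of inner affine layers `ℝ^r → ℝ^r`, and an
output affine layer `ℝ^r → ℝ`.  Each affine layer except the last is followed by the
componentwise Leaky-ReLU activation.  The number of hidden layers (the depth) is
`hid.length + 1`. -/
structure LNet (d r : ℕ) where
  W0 : Fin r → Fin d → ℝ
  b0 : Fin r → ℝ
  hid : List ((Fin r → Fin r → ℝ) × (Fin r → ℝ))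
  Wout : Fin r → ℝ
  bout : ℝ

/-- Evaluation of a Leaky-ReLU network. -/
def LNet.eval (ν : ℝ) {d r : ℕ} (net : LNet d r) (x : Fin d → ℝ) : ℝ :=
  let h := net.hid.foldl
    (fun (h : Fin r → ℝ) p => fun i => lrelu ν ((∑ j, p.1 i j * h j) + p.2 i))
    (fun i => lrelu ν ((∑ j, net.W0 i j * x j) + net.b0 i))
  (∑ i, net.Wout i * h i) + net.bout

/-- All weights and biases of the network are bounded by `B` in absolute value. -/
def LNet.bounded {d r : ℕ} (net : LNet d r) (B : ℝ) : Prop :=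
  (∀ i j, |net.W0 i j| ≤ B) ∧ (∀ i, |net.b0 i| ≤ B) ∧
  (∀ p ∈ net.hid, (∀ i j, |p.1 i j| ≤ B) ∧ (∀ i, |p.2 i| ≤ B)) ∧
  (∀ i, |net.Wout i| ≤ B) ∧ |net.bout| ≤ B

/-- Membership in the class `F_{ρν}^{DNN}(L, r, B)` of Leaky-ReLU networks with
architecture `(L, (d, r, …, r, 1))` and all parameters bounded by `B`. -/
def memDNN (ν : ℝ) (d L r : ℕ) (B : ℝ) (f : (Fin d → ℝ) → ℝ) : Prop :=
  ∃ net : LNet d r, net.hid.length + 1 = L ∧ net.bounded B ∧ ∀ x, f x = net.eval ν x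

/-- The cube `[−a,a]^d`. -/
def cube (a : ℝ) (d : ℕ) : Set (Fin d → ℝ) := {x | ∀ i, x i ∈ Set.Icc (-a) a}


namespace PNA

variable {ν : ℝ}

lemma lrelu_of_nonneg (hν : ν ≤ 1) {x : ℝ} (hx : 0 ≤ x) : lrelu ν x = x := by
  unfold lrelu
  rcases hx.eq_or_lt with h | h
  · rw [← h]; simp
  · exact max_eq_left (by nlinarith)

lemma lrelu_relu (hν0 : 0 ≤ ν) (hν1 : ν ≤ 1) (z : ℝ) :
    lrelu ν z + ν * lrelu ν (-z) = (1 - ν^2) * max z 0 := by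
  unfold lrelu
  rcases le_total z 0 with h | h
  · rw [max_eq_right (by nlinarith : z ≤ ν * z), max_eq_left (by nlinarith : ν * -z ≤ -z),
      max_eq_right h]
    ring
  · rw [max_eq_left (by nlinarith : ν * z ≤ z), max_eq_right (by nlinarith : -z ≤ ν * -z),
      max_eq_left h]
    ring

/-! ### Sawtooth and Yarotsky approximation of the square -/

def g (t : ℝ) : ℝ := 2*t - 4 * max (t - 1/2) 0

lemma g_mem {t : ℝ} (h : t ∈ Set.Icc (0:ℝ) 1) : g t ∈ Set.Icc (0:ℝ) 1 := by
  obtain ⟨h0, h1⟩ := h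
  unfold g
  rcases le_total t (1/2) with h | h
  · rw [max_eq_right (by linarith)]; constructor <;> linarith
  · rw [max_eq_left (by linarith)]; constructor <;> linarith

lemma g_iter_mem {t : ℝ} (h : t ∈ Set.Icc (0:ℝ) 1) (k : ℕ) :
    g^[k] t ∈ Set.Icc (0:ℝ) 1 := by
  induction k with
  | zero => simpa using h
  | succ k ih => rw [Function.iterate_succ_apply']; exact g_mem ih

def fm (m : ℕ) (t : ℝ) : ℝ := t - ∑ j ∈ Finset.range m, g^[j+1] t / 4^(j+1)

lemma fm_zero (t : ℝ) : fm 0 t = t := by simp [fm]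

lemma fm_step (m : ℕ) (t : ℝ) : fm (m+1) t = fm m t - g^[m+1] t / 4^(m+1) := by
  unfold fm
  rw [Finset.sum_range_succ]
  ring

lemma fm_succ_eq (m : ℕ) (t : ℝ) : fm (m+1) t = t - g t / 2 + fm m (g t) / 4 := by
  unfold fm
  rw [Finset.sum_range_succ']
  have hs : ∑ j ∈ Finset.range m, g^[j+1] (g t) / 4^(j+1)
      = ∑ j ∈ Finset.range m, g^[j+1+1] t / 4^(j+1) := by
    refine Finset.sum_congr rfl fun j _ => ?_
    rw [← Function.iterate_succ_apply g (j+1) t]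
  rw [hs]
  have hs2 : (∑ j ∈ Finset.range m, g^[j+1+1] t / 4^(j+1)) / 4
      = ∑ j ∈ Finset.range m, g^[j+1+1] t / 4^(j+1+1) := by
    rw [Finset.sum_div]
    refine Finset.sum_congr rfl fun j _ => ?_
    ring
  have hone : g^[0+1] t = g t := by simp
  rw [sub_div, hs2, hone]
  generalize (∑ j ∈ Finset.range m, g^[j+1+1] t / 4^(j+1+1)) = S
  ring

lemma fm_sq_bound (m : ℕ) : ∀ t ∈ Set.Icc (0:ℝ) 1,
    fm m t - t^2 ∈ Set.Icc (0:ℝ) ((1/4)^(m+1)) := by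
  induction m with
  | zero =>
    intro t ⟨h0, h1⟩
    rw [fm_zero]
    constructor
    · nlinarith
    · norm_num; nlinarith [sq_nonneg (t - 1/2)]
  | succ m ih =>
    intro t ht
    obtain ⟨h0, h1⟩ := ht
    have hg := g_mem ⟨h0, h1⟩
    have key : t - g t / 2 + (g t)^2/4 - t^2 = 0 := by
      unfold g
      rcases le_total t (1/2) with h | h
      · rw [max_eq_right (by linarith)]; ring
      · rw [max_eq_left (by linarith)]; ring
    have hE := ih (g t) hg
    have hrw : fm (m+1) t - t^2
        = (fm m (g t) - (g t)^2)/4 + (t - g t/2 + (g t)^2/4 - t^2) := by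
      rw [fm_succ_eq]; ring
    have h14 : ((1:ℝ)/4)^(m+1+1) = (1/4)^(m+1)/4 := by ring
    constructor
    · have := hE.1; rw [hrw, key]; linarith
    · have := hE.2; rw [hrw, key, h14]; linarith

lemma fm_nonneg (m : ℕ) {t : ℝ} (ht : t ∈ Set.Icc (0:ℝ) 1) : 0 ≤ fm m t := by
  have := (fm_sq_bound m t ht).1
  nlinarith



/-! ### Generic layer framework -/

abbrev Layer (r : ℕ) := (Fin r → Fin r → ℝ) × (Fin r → ℝ)

def lin {s : ℕ} : List (ℝ × Fin s) → Fin s → ℝ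
  | [], _ => 0
  | (c, k) :: l, j => (if j = k then c else 0) + lin l j

lemma sum_lin {s : ℕ} (l : List (ℝ × Fin s)) (h : Fin s → ℝ) :
    ∑ j, lin l j * h j = (l.map fun p => p.1 * h p.2).sum := by
  induction l with
  | nil => simp [lin]
  | cons p l ih =>
    obtain ⟨c, k⟩ := p
    simp only [lin, add_mul, Finset.sum_add_distrib, ih, List.map_cons, List.sum_cons]
    congr 1
    rw [Finset.sum_eq_single k]
    · simp
    · intro b _ hb; simp [if_neg hb]
    · intro hk; exact absurd (Finset.mem_univ k) hk

lemma abs_lin_le {s : ℕ} (l : List (ℝ × Fin s)) (j : Fin s) :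
    |lin l j| ≤ (l.map fun p => |p.1|).sum := by
  induction l with
  | nil => simp [lin]
  | cons p l ih =>
    obtain ⟨c, k⟩ := p
    simp only [lin, List.map_cons, List.sum_cons]
    refine (abs_add_le _ _).trans (add_le_add ?_ ih)
    split_ifs <;> simp

def mkL {r : ℕ} (rows : Fin r → List (ℝ × Fin r)) (b : Fin r → ℝ) : Layer r :=
  (fun i => lin (rows i), b)

def step (ν : ℝ) {r : ℕ} (h : Fin r → ℝ) (p : Layer r) : Fin r → ℝ :=
  fun i => lrelu ν ((∑ j, p.1 i j * h j) + p.2 i)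

lemma step_mk (ν : ℝ) {r : ℕ} (rows : Fin r → List (ℝ × Fin r)) (b : Fin r → ℝ)
    (h : Fin r → ℝ) (i : Fin r) :
    step ν h (mkL rows b) i
      = lrelu ν (((rows i).map fun p => p.1 * h p.2).sum + b i) := by
  unfold step mkL
  rw [sum_lin]

def evalL (ν : ℝ) {r : ℕ} (L : List (Layer r)) (h : Fin r → ℝ) : Fin r → ℝ :=
  L.foldl (step ν) h

lemma evalL_nil (ν : ℝ) {r : ℕ} (h : Fin r → ℝ) : evalL ν [] h = h := rfl

lemma evalL_cons (ν : ℝ) {r : ℕ} (p : Layer r) (L : List (Layer r)) (h : Fin r → ℝ) :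
    evalL ν (p :: L) h = evalL ν L (step ν h p) := rfl

lemma evalL_append (ν : ℝ) {r : ℕ} (L₁ L₂ : List (Layer r)) (h : Fin r → ℝ) :
    evalL ν (L₁ ++ L₂) h = evalL ν L₂ (evalL ν L₁ h) := by
  unfold evalL
  rw [List.foldl_append]

/-! ### Coordinates -/

variable (d : ℕ) [NeZero d]

def fidx (x : ℕ) : Fin (24*d) :=
  ⟨x % (24*d), Nat.mod_lt _ (by have := Nat.pos_of_ne_zero (NeZero.ne d); omega)⟩

lemma fidx_val {x : ℕ} (h : x < 24*d) : (fidx d x).1 = x := Nat.mod_eq_of_lt h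

/-! ### Layers of the construction.

Slot `j < d` lives at coordinate `16 j` and holds a value `v j + Mb` with `|v j| ≤ Mb`.
A "pair" `j` (multiplying slots `2j` and `2j+1`) uses channels `16 j + 1 + 5 c + s`
for chains `c = 0 (A), 1 (B), 2 (C)` and channel roles
`s = 0 (x₁), 1 (x₂), 2 (x₃), 3 (σ), 4 (τ)`. -/

variable (ν Mb : ℝ)

/-- linear form (with the bias returned separately by `tvBias`) computing the chain input
`t_c ∈ [0,1]` of pair `j` from the slot values. -/
def tvRows (j c : ℕ) : List (ℝ × Fin (24*d)) :=
  if c = 0 then [(1/(4*Mb), fidx d (16*(2*j))), (1/(4*Mb), fidx d (16*(2*j+1)))]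
  else if c = 1 then [(1/(4*Mb), fidx d (16*(2*j)))]
  else [(1/(4*Mb), fidx d (16*(2*j+1)))]

def tvBias (c : ℕ) : ℝ := if c = 0 then 0 else 1/4

/-- First layer of a level (for levels ≥ 1, reading shifted slot values). -/
def initRows (n : ℕ) : Fin (24*d) → List (ℝ × Fin (24*d)) := fun i =>
  let j := i.1 / 16
  let t := i.1 % 16
  if t = 0 then (if n % 2 = 1 ∧ j = n - 1 then [((1:ℝ), fidx d (16*j))] else [])
  else if j < n/2 then
    (let c := (t-1)/5
     let s := (t-1)%5
     if s = 1 then (tvRows d Mb j c).map (fun p => (-p.1, p.2)) else tvRows d Mb j c)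
  else []

def initBias (n : ℕ) : Fin (24*d) → ℝ := fun i =>
  let j := i.1 / 16
  let t := i.1 % 16
  if t = 0 then 0
  else if j < n/2 then
    (let c := (t-1)/5
     let s := (t-1)%5
     if s = 0 then tvBias c - 1/2 else if s = 1 then 1/2 - tvBias c else tvBias c)
  else 0

/-- Chain-step layer `k`. -/
def stepRows (k : ℕ) : Fin (24*d) → List (ℝ × Fin (24*d)) := fun i =>
  let j := i.1 / 16
  let t := i.1 % 16
  if t = 0 then [((1:ℝ), fidx d (16*j))]
  else
    let c := (t-1)/5
    let s := (t-1)%5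
    let x1 := fidx d (16*j + 1 + 5*c)
    let x2 := fidx d (16*j + 2 + 5*c)
    let x3 := fidx d (16*j + 3 + 5*c)
    let sg := fidx d (16*j + 4 + 5*c)
    let tu := fidx d (16*j + 5 + 5*c)
    if s = 0 then [(-4/(1-ν^2), x1), (-4*ν/(1-ν^2), x2), ((2:ℝ), x3)]
    else if s = 1 then [(4/(1-ν^2), x1), (4*ν/(1-ν^2), x2), ((-2:ℝ), x3)]
    else if s = 2 then [(-4/(1-ν^2), x1), (-4*ν/(1-ν^2), x2), ((2:ℝ), x3)]
    else if s = 3 then [((4/(1-ν^2))/4^(k+1), x1), ((4*ν/(1-ν^2))/4^(k+1), x2),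
      (-2/4^(k+1), x3), ((1:ℝ), sg)]
    else [((1:ℝ), tu)]

def stepBias : Fin (24*d) → ℝ := fun i =>
  let t := i.1 % 16
  if t = 0 then 0
  else
    let s := (t-1)%5
    if s = 0 then -(1/2) else if s = 1 then 1/2 else 0

/-- Final layer of a level: recombination into new slot values. -/
def combRows (n : ℕ) : Fin (24*d) → List (ℝ × Fin (24*d)) := fun i =>
  let j := i.1 / 16
  let t := i.1 % 16
  if t = 0 then
    (if j < n/2 then
      [(8*Mb^2, fidx d (16*j+4)), (-8*Mb^2, fidx d (16*j+5)),
       (-8*Mb^2, fidx d (16*j+9)), (8*Mb^2, fidx d (16*j+10)),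
       (-8*Mb^2, fidx d (16*j+14)), (8*Mb^2, fidx d (16*j+15))]
    else if n % 2 = 1 ∧ j = n/2 then [((1:ℝ), fidx d (16*(n-1)))]
    else [])
  else []

def combBias (n : ℕ) : Fin (24*d) → ℝ := fun i =>
  if i.1 % 16 = 0 ∧ i.1 / 16 < n/2 then -2*Mb^2 + Mb else 0

/-- The full level: `m + 2` layers. -/
def levelL (n m : ℕ) : List (Layer (24*d)) :=
  mkL (initRows d Mb n) (initBias d n)
    :: (((List.range m).map fun k => mkL (stepRows d ν k) (stepBias d))
        ++ [mkL (combRows d Mb n) (combBias d Mb n)])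

lemma levelL_length (n m : ℕ) : (levelL d ν Mb n m).length = m + 2 := by
  simp [levelL]

/-! ### The invariant describing the state inside a level -/

variable (d : ℕ) [NeZero d] (ν Mb : ℝ)

def tval (v : ℕ → ℝ) (j c : ℕ) : ℝ :=
  if c = 0 then (v (2*j) + v (2*j+1) + 2*Mb)/(4*Mb)
  else if c = 1 then (v (2*j) + 2*Mb)/(4*Mb)
  else (v (2*j+1) + 2*Mb)/(4*Mb)

def Inv (n k : ℕ) (v : ℕ → ℝ) (h : Fin (24*d) → ℝ) : Prop :=
  (∀ j < n/2, ∀ c < 3,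
    h (fidx d (16*j+1+5*c)) = lrelu ν (g^[k] (tval Mb v j c) - 1/2) ∧
    h (fidx d (16*j+2+5*c)) = lrelu ν (1/2 - g^[k] (tval Mb v j c)) ∧
    h (fidx d (16*j+3+5*c)) = g^[k] (tval Mb v j c) ∧
    h (fidx d (16*j+4+5*c)) = fm k (tval Mb v j c) ∧
    h (fidx d (16*j+5+5*c)) = tval Mb v j c) ∧
  (n % 2 = 1 → h (fidx d (16*(n-1))) = v (n-1) + Mb)

/-! ### Evaluation of the chain-step layer -/

section StepEval

variable {d : ℕ} [NeZero d] {k j c : ℕ}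

lemma step_eval_s0 (hj : j < d) (hc : c < 3) (h : Fin (24*d) → ℝ) :
    step ν h (mkL (stepRows d ν k) (stepBias d)) (fidx d (16*j+1+5*c))
      = lrelu ν ((-4/(1-ν^2)) * h (fidx d (16*j+1+5*c))
          + ((-4*ν/(1-ν^2)) * h (fidx d (16*j+2+5*c)) + (2 * h (fidx d (16*j+3+5*c)) + 0))
          + -(1/2)) := by
  have hX : (fidx d (16*j+1+5*c)).1 = 16*j+1+5*c := fidx_val d (by omega)
  rw [step_mk]
  simp only [stepRows, stepBias, hX]
  have h1 : (16*j+1+5*c) % 16 = 1+5*c := by omega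
  have h2 : (16*j+1+5*c) / 16 = j := by omega
  have h3 : (1+5*c-1)/5 = c := by omega
  have h4 : (1+5*c-1)%5 = 0 := by omega
  simp only [h1, h2, h3, h4]
  norm_num

end StepEval


section StepEval2

variable {d : ℕ} [NeZero d] {k j c : ℕ}

lemma step_eval_s1 (hj : j < d) (hc : c < 3) (h : Fin (24*d) → ℝ) :
    step ν h (mkL (stepRows d ν k) (stepBias d)) (fidx d (16*j+2+5*c))
      = lrelu ν ((4/(1-ν^2)) * h (fidx d (16*j+1+5*c))
          + ((4*ν/(1-ν^2)) * h (fidx d (16*j+2+5*c)) + (-2 * h (fidx d (16*j+3+5*c)) + 0))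
          + 1/2) := by
  have hX : (fidx d (16*j+2+5*c)).1 = 16*j+2+5*c := fidx_val d (by omega)
  rw [step_mk]
  simp only [stepRows, stepBias, hX]
  have h1 : (16*j+2+5*c) % 16 = 2+5*c := by omega
  have h2 : (16*j+2+5*c) / 16 = j := by omega
  have h3 : (2+5*c-1)/5 = c := by omega
  have h4 : (2+5*c-1)%5 = 1 := by omega
  simp only [h1, h2, h3, h4]
  norm_num

lemma step_eval_s2 (hj : j < d) (hc : c < 3) (h : Fin (24*d) → ℝ) :
    step ν h (mkL (stepRows d ν k) (stepBias d)) (fidx d (16*j+3+5*c))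
      = lrelu ν ((-4/(1-ν^2)) * h (fidx d (16*j+1+5*c))
          + ((-4*ν/(1-ν^2)) * h (fidx d (16*j+2+5*c)) + (2 * h (fidx d (16*j+3+5*c)) + 0))
          + 0) := by
  have hX : (fidx d (16*j+3+5*c)).1 = 16*j+3+5*c := fidx_val d (by omega)
  rw [step_mk]
  simp only [stepRows, stepBias, hX]
  have h1 : (16*j+3+5*c) % 16 = 3+5*c := by omega
  have h2 : (16*j+3+5*c) / 16 = j := by omega
  have h3 : (3+5*c-1)/5 = c := by omega
  have h4 : (3+5*c-1)%5 = 2 := by omega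
  simp only [h1, h2, h3, h4]
  norm_num

lemma step_eval_s3 (hj : j < d) (hc : c < 3) (h : Fin (24*d) → ℝ) :
    step ν h (mkL (stepRows d ν k) (stepBias d)) (fidx d (16*j+4+5*c))
      = lrelu ν ((4/(1-ν^2)/4^(k+1)) * h (fidx d (16*j+1+5*c))
          + ((4*ν/(1-ν^2)/4^(k+1)) * h (fidx d (16*j+2+5*c))
            + ((-2/4^(k+1)) * h (fidx d (16*j+3+5*c)) + (h (fidx d (16*j+4+5*c)) + 0)))
          + 0) := by
  have hX : (fidx d (16*j+4+5*c)).1 = 16*j+4+5*c := fidx_val d (by omega)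
  rw [step_mk]
  simp only [stepRows, stepBias, hX]
  have h1 : (16*j+4+5*c) % 16 = 4+5*c := by omega
  have h2 : (16*j+4+5*c) / 16 = j := by omega
  have h3 : (4+5*c-1)/5 = c := by omega
  have h4 : (4+5*c-1)%5 = 3 := by omega
  simp only [h1, h2, h3, h4]
  norm_num

lemma step_eval_s4 (hj : j < d) (hc : c < 3) (h : Fin (24*d) → ℝ) :
    step ν h (mkL (stepRows d ν k) (stepBias d)) (fidx d (16*j+5+5*c))
      = lrelu ν (h (fidx d (16*j+5+5*c))) := by
  have hX : (fidx d (16*j+5+5*c)).1 = 16*j+5+5*c := fidx_val d (by omega)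
  rw [step_mk]
  simp only [stepRows, stepBias, hX]
  have h1 : (16*j+5+5*c) % 16 = 5+5*c := by omega
  have h2 : (16*j+5+5*c) / 16 = j := by omega
  have h3 : (5+5*c-1)/5 = c := by omega
  have h4 : (5+5*c-1)%5 = 4 := by omega
  simp only [h1, h2, h3, h4]
  norm_num

lemma step_eval_slot (hj : j < d) (h : Fin (24*d) → ℝ) :
    step ν h (mkL (stepRows d ν k) (stepBias d)) (fidx d (16*j))
      = lrelu ν (h (fidx d (16*j))) := by
  have hX : (fidx d (16*j)).1 = 16*j := fidx_val d (by omega)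
  rw [step_mk]
  simp only [stepRows, stepBias, hX]
  have h1 : (16*j) % 16 = 0 := by omega
  have h2 : (16*j) / 16 = j := by omega
  simp only [h1, h2]
  norm_num

end StepEval2

lemma negmap_sum {r : ℕ} (l : List (ℝ × Fin r)) (h : Fin r → ℝ) :
    ((l.map fun p => (-p.1, p.2)).map fun p => p.1 * h p.2).sum
      = -((l.map fun p => p.1 * h p.2).sum) := by
  induction l with
  | nil => simp
  | cons p l ih =>
    simp only [List.map_cons, List.sum_cons, ih]
    ring

variable (Mb : ℝ)

/-- value of the chain input linear form on a state. -/
def tvh (h : Fin (24*d) → ℝ) (j c : ℕ) : ℝ :=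
  ((tvRows d Mb j c).map fun p => p.1 * h p.2).sum + tvBias c

section InitEval

variable {d : ℕ} [NeZero d] {n j c : ℕ} {Mb : ℝ}

lemma init_eval_s0 (hj : j < d) (hjn : j < n/2) (hc : c < 3) (h : Fin (24*d) → ℝ) :
    step ν h (mkL (initRows d Mb n) (initBias d n)) (fidx d (16*j+1+5*c))
      = lrelu ν (tvh d Mb h j c - 1/2) := by
  have hX : (fidx d (16*j+1+5*c)).1 = 16*j+1+5*c := fidx_val d (by omega)
  rw [step_mk]
  simp only [initRows, initBias, hX, tvh]
  have h1 : (16*j+1+5*c) % 16 = 1+5*c := by omega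
  have h2 : (16*j+1+5*c) / 16 = j := by omega
  have h3 : (1+5*c-1)/5 = c := by omega
  have h4 : (1+5*c-1)%5 = 0 := by omega
  simp only [h1, h2, h3, h4, if_pos hjn]
  norm_num
  congr 1
  ring

lemma init_eval_s1 (hj : j < d) (hjn : j < n/2) (hc : c < 3) (h : Fin (24*d) → ℝ) :
    step ν h (mkL (initRows d Mb n) (initBias d n)) (fidx d (16*j+2+5*c))
      = lrelu ν (1/2 - tvh d Mb h j c) := by
  have hX : (fidx d (16*j+2+5*c)).1 = 16*j+2+5*c := fidx_val d (by omega)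
  rw [step_mk]
  simp only [initRows, initBias, hX, tvh]
  have h1 : (16*j+2+5*c) % 16 = 2+5*c := by omega
  have h2 : (16*j+2+5*c) / 16 = j := by omega
  have h3 : (2+5*c-1)/5 = c := by omega
  have h4 : (2+5*c-1)%5 = 1 := by omega
  simp only [h1, h2, h3, h4, if_pos hjn]
  have h5 : ¬((2+5*c) = 0) := by omega
  simp only [ite_true, if_neg h5]
  rw [negmap_sum]
  norm_num
  congr 1
  ring

lemma init_eval_s234 {s : ℕ} (hs : 2 ≤ s) (hs5 : s ≤ 4) (hj : j < d) (hjn : j < n/2)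
    (hc : c < 3) (h : Fin (24*d) → ℝ) :
    step ν h (mkL (initRows d Mb n) (initBias d n)) (fidx d (16*j+(s+1)+5*c))
      = lrelu ν (tvh d Mb h j c) := by
  have hX : (fidx d (16*j+(s+1)+5*c)).1 = 16*j+(s+1)+5*c := fidx_val d (by omega)
  rw [step_mk]
  simp only [initRows, initBias, hX, tvh]
  have h1 : (16*j+(s+1)+5*c) % 16 = (s+1)+5*c := by omega
  have h2 : (16*j+(s+1)+5*c) / 16 = j := by omega
  have h3 : ((s+1)+5*c-1)/5 = c := by omega
  have h4 : ((s+1)+5*c-1)%5 = s := by omega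
  have h5 : ¬((s+1)+5*c = 0) := by omega
  have h6 : ¬(s = 0) := by omega
  have h7 : ¬(s = 1) := by omega
  simp only [h1, h2, h3, h4, if_pos hjn, if_neg h5, if_neg h6, if_neg h7]

lemma init_eval_pass (hodd : n % 2 = 1) (hn : n - 1 < d) (h : Fin (24*d) → ℝ) :
    step ν h (mkL (initRows d Mb n) (initBias d n)) (fidx d (16*(n-1)))
      = lrelu ν (h (fidx d (16*(n-1)))) := by
  have hX : (fidx d (16*(n-1))).1 = 16*(n-1) := fidx_val d (by omega)
  rw [step_mk]
  simp only [initRows, initBias, hX]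
  have h1 : (16*(n-1)) % 16 = 0 := by omega
  have h2 : (16*(n-1)) / 16 = n-1 := by omega
  simp only [h1, h2, if_pos rfl, hodd]
  norm_num

end InitEval

section CombEval

variable {d : ℕ} [NeZero d] {n j : ℕ} {Mb : ℝ}

lemma comb_eval_pair (hj : j < d) (hjn : j < n/2) (h : Fin (24*d) → ℝ) :
    step ν h (mkL (combRows d Mb n) (combBias d Mb n)) (fidx d (16*j))
      = lrelu ν (8*Mb^2 * h (fidx d (16*j+4)) - 8*Mb^2 * h (fidx d (16*j+5))
          - 8*Mb^2 * h (fidx d (16*j+9)) + 8*Mb^2 * h (fidx d (16*j+10))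
          - 8*Mb^2 * h (fidx d (16*j+14)) + 8*Mb^2 * h (fidx d (16*j+15))
          + (-2*Mb^2 + Mb)) := by
  have hX : (fidx d (16*j)).1 = 16*j := fidx_val d (by omega)
  rw [step_mk]
  simp only [combRows, combBias, hX]
  have h1 : (16*j) % 16 = 0 := by omega
  have h2 : (16*j) / 16 = j := by omega
  simp only [h1, h2, if_pos hjn]
  norm_num [hjn]
  congr 1
  ring

lemma comb_eval_pass (hodd : n % 2 = 1) (hq : n/2 < d) (h : Fin (24*d) → ℝ) :
    step ν h (mkL (combRows d Mb n) (combBias d Mb n)) (fidx d (16*(n/2)))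
      = lrelu ν (h (fidx d (16*(n-1)))) := by
  have hX : (fidx d (16*(n/2))).1 = 16*(n/2) := fidx_val d (by omega)
  rw [step_mk]
  simp only [combRows, combBias, hX]
  have h1 : (16*(n/2)) % 16 = 0 := by omega
  have h2 : (16*(n/2)) / 16 = n/2 := by omega
  have h3 : ¬(n/2 < n/2) := by omega
  simp only [h1, h2, if_neg h3, hodd]
  norm_num

end CombEval

/-! ### Invariant transitions -/

section InvLemmas

variable {d : ℕ} [NeZero d] {ν Mb : ℝ} {n : ℕ} {v : ℕ → ℝ}

lemma tvh_eq {j c : ℕ} (hMb : (1:ℝ) ≤ Mb) (h : Fin (24*d) → ℝ)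
    (h1 : h (fidx d (16*(2*j))) = v (2*j) + Mb)
    (h2 : h (fidx d (16*(2*j+1))) = v (2*j+1) + Mb) :
    tvh d Mb h j c = tval Mb v j c := by
  have hMb0 : Mb ≠ 0 := by linarith
  by_cases hc0 : c = 0
  · subst hc0
    simp only [tvh, tvRows, tvBias, tval, eq_self_iff_true, ite_true,
      List.map_cons, List.map_nil, List.sum_cons, List.sum_nil]
    rw [h1, h2]
    field_simp
    ring
  by_cases hc1 : c = 1
  · subst hc1
    simp only [tvh, tvRows, tvBias, tval, Nat.one_ne_zero, eq_self_iff_true, ite_true,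
      ite_false, List.map_cons, List.map_nil, List.sum_cons, List.sum_nil]
    rw [h1]
    field_simp
    ring
  · simp only [tvh, tvRows, tvBias, tval, hc0, hc1, ite_false,
      List.map_cons, List.map_nil, List.sum_cons, List.sum_nil]
    rw [h2]
    field_simp
    ring

lemma tval_mem (hMb : (1:ℝ) ≤ Mb) {j c : ℕ}
    (hu : |v (2*j)| ≤ Mb) (hv : |v (2*j+1)| ≤ Mb) :
    tval Mb v j c ∈ Set.Icc (0:ℝ) 1 := by
  have h4 : (0:ℝ) < 4*Mb := by linarith
  have hu' := abs_le.1 hu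
  have hv' := abs_le.1 hv
  unfold tval
  split_ifs <;>
  · constructor
    · apply div_nonneg _ (by linarith)
      linarith [hu'.1, hv'.1]
    · rw [div_le_one h4]
      linarith [hu'.2, hv'.2]

lemma init_Inv (hν1 : ν ≤ 1) (hMb : (1:ℝ) ≤ Mb) (hnd : n ≤ d) (hd1 : 1 ≤ n)
    (hv : ∀ i < n, |v i| ≤ Mb)
    (h : Fin (24*d) → ℝ) (hslots : ∀ i < n, h (fidx d (16*i)) = v i + Mb) :
    Inv d ν Mb n 0 v (step ν h (mkL (initRows d Mb n) (initBias d n))) := by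
  have hIcc : ∀ j < n/2, ∀ c < 3, tval Mb v j c ∈ Set.Icc (0:ℝ) 1 := by
    intro j hj c _
    exact tval_mem hMb (hv _ (by omega)) (hv _ (by omega))
  constructor
  · intro j hj c hc
    have hjd : j < d := by omega
    have htv : tvh d Mb h j c = tval Mb v j c :=
      tvh_eq hMb h (hslots _ (by omega)) (hslots _ (by omega))
    have hmem := hIcc j hj c hc
    have e2 : (16*j+3+5*c) = 16*j+(2+1)+5*c := by ring
    have e3 : (16*j+4+5*c) = 16*j+(3+1)+5*c := by ring
    have e4 : (16*j+5+5*c) = 16*j+(4+1)+5*c := by ring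
    refine ⟨?_, ?_, ?_, ?_, ?_⟩
    · rw [init_eval_s0 (ν := ν) hjd hj hc h, htv]
      simp
    · rw [init_eval_s1 (ν := ν) hjd hj hc h, htv]
      simp
    · rw [e2, init_eval_s234 (ν := ν) (by norm_num) (by norm_num) hjd hj hc h, htv]
      simp only [Function.iterate_zero, id_eq]
      exact lrelu_of_nonneg hν1 hmem.1
    · rw [e3, init_eval_s234 (ν := ν) (by norm_num) (by norm_num) hjd hj hc h, htv]
      rw [fm_zero]
      exact lrelu_of_nonneg hν1 hmem.1
    · rw [e4, init_eval_s234 (ν := ν) (by norm_num) (by norm_num) hjd hj hc h, htv]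
      exact lrelu_of_nonneg hν1 hmem.1
  · intro hodd
    have hnd' : n - 1 < d := by omega
    rw [init_eval_pass (ν := ν) hodd hnd' h, hslots _ (by omega)]
    have := abs_le.1 (hv (n-1) (by omega))
    exact lrelu_of_nonneg hν1 (by linarith [this.1])

lemma combA (hν0 : 0 ≤ ν) (hν1 : ν < 1) (sk : ℝ) :
    -4/(1-ν^2) * lrelu ν (sk - 1/2) + (-4*ν/(1-ν^2) * lrelu ν (1/2 - sk) + (2*sk + 0)) + -(1/2)
      = g sk - 1/2 := by
  have hnz : (1:ℝ) - ν^2 ≠ 0 := by nlinarith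
  have hneg : (1/2 - sk : ℝ) = -(sk - 1/2) := by ring
  have key := lrelu_relu hν0 hν1.le (sk - 1/2)
  have ha : lrelu ν (sk - 1/2) = (1-ν^2) * max (sk - 1/2) 0 - ν * lrelu ν (-(sk - 1/2)) := by
    linear_combination key
  rw [hneg, ha]
  show _ = 2*sk - 4 * max (sk - 1/2) 0 - 1/2
  field_simp
  ring

lemma combB (hν0 : 0 ≤ ν) (hν1 : ν < 1) (sk : ℝ) :
    4/(1-ν^2) * lrelu ν (sk - 1/2) + (4*ν/(1-ν^2) * lrelu ν (1/2 - sk) + (-2 * sk + 0)) + 1/2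
      = 1/2 - g sk := by
  have hnz : (1:ℝ) - ν^2 ≠ 0 := by nlinarith
  have hneg : (1/2 - sk : ℝ) = -(sk - 1/2) := by ring
  have key := lrelu_relu hν0 hν1.le (sk - 1/2)
  have ha : lrelu ν (sk - 1/2) = (1-ν^2) * max (sk - 1/2) 0 - ν * lrelu ν (-(sk - 1/2)) := by
    linear_combination key
  rw [hneg, ha]
  show _ = 1/2 - (2*sk - 4 * max (sk - 1/2) 0)
  field_simp
  ring

lemma combC (hν0 : 0 ≤ ν) (hν1 : ν < 1) (sk : ℝ) :
    -4/(1-ν^2) * lrelu ν (sk - 1/2) + (-4*ν/(1-ν^2) * lrelu ν (1/2 - sk) + (2*sk + 0)) + 0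
      = g sk := by
  have hnz : (1:ℝ) - ν^2 ≠ 0 := by nlinarith
  have hneg : (1/2 - sk : ℝ) = -(sk - 1/2) := by ring
  have key := lrelu_relu hν0 hν1.le (sk - 1/2)
  have ha : lrelu ν (sk - 1/2) = (1-ν^2) * max (sk - 1/2) 0 - ν * lrelu ν (-(sk - 1/2)) := by
    linear_combination key
  rw [hneg, ha]
  show _ = 2*sk - 4 * max (sk - 1/2) 0
  field_simp
  ring

lemma combD (hν0 : 0 ≤ ν) (hν1 : ν < 1) (sk σ P : ℝ) (hP : P ≠ 0) :
    4/(1-ν^2)/P * lrelu ν (sk - 1/2)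
      + (4*ν/(1-ν^2)/P * lrelu ν (1/2 - sk) + ((-2/P) * sk + (σ + 0))) + 0
      = σ - g sk/P := by
  have hnz : (1:ℝ) - ν^2 ≠ 0 := by nlinarith
  have hneg : (1/2 - sk : ℝ) = -(sk - 1/2) := by ring
  have key := lrelu_relu hν0 hν1.le (sk - 1/2)
  have ha : lrelu ν (sk - 1/2) = (1-ν^2) * max (sk - 1/2) 0 - ν * lrelu ν (-(sk - 1/2)) := by
    linear_combination key
  rw [hneg, ha]
  show _ = σ - (2*sk - 4 * max (sk - 1/2) 0)/P
  field_simp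
  ring

lemma step_Inv (hν0 : 0 ≤ ν) (hν1 : ν < 1) (hMb : (1:ℝ) ≤ Mb) {k : ℕ} (hnd : n ≤ d)
    (hv : ∀ i < n, |v i| ≤ Mb)
    (h : Fin (24*d) → ℝ) (H : Inv d ν Mb n k v h) :
    Inv d ν Mb n (k+1) v (step ν h (mkL (stepRows d ν k) (stepBias d))) := by
  constructor
  · intro j hj c hc
    have hjd : j < d := by omega
    obtain ⟨hx1, hx2, hx3, hsg, htu⟩ := H.1 j hj c hc
    have hmem : tval Mb v j c ∈ Set.Icc (0:ℝ) 1 :=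
      tval_mem hMb (hv _ (by omega)) (hv _ (by omega))
    have hskmem : g^[k] (tval Mb v j c) ∈ Set.Icc (0:ℝ) 1 := g_iter_mem hmem k
    have hgsk : g (g^[k] (tval Mb v j c)) ∈ Set.Icc (0:ℝ) 1 := g_mem hskmem
    have hP : ((4:ℝ)^(k+1)) ≠ 0 := by positivity
    refine ⟨?_, ?_, ?_, ?_, ?_⟩
    · rw [step_eval_s0 (ν := ν) hjd hc h, hx1, hx2, hx3,
        Function.iterate_succ_apply' g k, combA hν0 hν1]
    · rw [step_eval_s1 (ν := ν) hjd hc h, hx1, hx2, hx3,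
        Function.iterate_succ_apply' g k, combB hν0 hν1]
    · rw [step_eval_s2 (ν := ν) hjd hc h, hx1, hx2, hx3,
        Function.iterate_succ_apply' g k, combC hν0 hν1]
      exact lrelu_of_nonneg hν1.le hgsk.1
    · rw [step_eval_s3 (ν := ν) hjd hc h, hx1, hx2, hx3, hsg]
      have harg : 4/(1-ν^2)/4^(k+1) * lrelu ν (g^[k] (tval Mb v j c) - 1/2)
          + (4*ν/(1-ν^2)/4^(k+1) * lrelu ν (1/2 - g^[k] (tval Mb v j c))
            + ((-2/4^(k+1)) * g^[k] (tval Mb v j c) + (fm k (tval Mb v j c) + 0))) + 0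
          = fm (k+1) (tval Mb v j c) := by
        rw [combD hν0 hν1 _ _ _ hP, fm_step, Function.iterate_succ_apply' g k]
      rw [harg]
      exact lrelu_of_nonneg hν1.le (fm_nonneg (k+1) hmem)
    · rw [step_eval_s4 (ν := ν) hjd hc h, htu]
      exact lrelu_of_nonneg hν1.le hmem.1
  · intro hodd
    have hnd' : n - 1 < d := by omega
    rw [step_eval_slot (ν := ν) hnd' h, H.2 hodd]
    have := abs_le.1 (hv (n-1) (by omega))
    exact lrelu_of_nonneg hν1.le (by linarith [this.1])

end InvLemmas

/-! ### Combine layer output and the level lemma -/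

def wv (Mb : ℝ) (m : ℕ) (v : ℕ → ℝ) (j : ℕ) : ℝ :=
  8*Mb^2 * (fm m (tval Mb v j 0) - tval Mb v j 0 - fm m (tval Mb v j 1) + tval Mb v j 1
      - fm m (tval Mb v j 2) + tval Mb v j 2) - 2*Mb^2

section LevelLemmas

variable {d : ℕ} [NeZero d] {ν Mb : ℝ} {n : ℕ} {v : ℕ → ℝ}

lemma comb_out (hν1 : ν ≤ 1) {m : ℕ} (hnd : n ≤ d) (hn1 : 1 ≤ n)
    (hnwv : ∀ j < n/2, 0 ≤ wv Mb m v j + Mb)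
    (hvn : n % 2 = 1 → 0 ≤ v (n-1) + Mb)
    (h : Fin (24*d) → ℝ) (H : Inv d ν Mb n m v h) :
    (∀ j < n/2, step ν h (mkL (combRows d Mb n) (combBias d Mb n)) (fidx d (16*j))
        = wv Mb m v j + Mb) ∧
    (n % 2 = 1 → step ν h (mkL (combRows d Mb n) (combBias d Mb n)) (fidx d (16*(n/2)))
        = v (n-1) + Mb) := by
  constructor
  · intro j hj
    have hjd : j < d := by omega
    have H0 := H.1 j hj 0 (by norm_num)
    have H1 := H.1 j hj 1 (by norm_num)
    have H2 := H.1 j hj 2 (by norm_num)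
    obtain ⟨-, -, -, hsg0, htu0⟩ := H0
    obtain ⟨-, -, -, hsg1, htu1⟩ := H1
    obtain ⟨-, -, -, hsg2, htu2⟩ := H2
    norm_num at hsg0 htu0 hsg1 htu1 hsg2 htu2
    rw [comb_eval_pair (ν := ν) hjd hj h, hsg0, htu0, hsg1, htu1, hsg2, htu2]
    have harg : 8*Mb^2 * fm m (tval Mb v j 0) - 8*Mb^2 * tval Mb v j 0
        - 8*Mb^2 * fm m (tval Mb v j 1) + 8*Mb^2 * tval Mb v j 1
        - 8*Mb^2 * fm m (tval Mb v j 2) + 8*Mb^2 * tval Mb v j 2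
        + (-2*Mb^2 + Mb) = wv Mb m v j + Mb := by
      unfold wv
      ring
    rw [harg]
    exact lrelu_of_nonneg hν1 (hnwv j hj)
  · intro hodd
    have hq : n/2 < d := by omega
    rw [comb_eval_pass (ν := ν) hodd hq h, H.2 hodd]
    exact lrelu_of_nonneg hν1 (hvn hodd)

lemma werr (hMb : (1:ℝ) ≤ Mb) (m : ℕ) (u w : ℝ) (hu : |u| ≤ Mb) (hw : |w| ≤ Mb) :
    |8*Mb^2*(fm m ((u+w+2*Mb)/(4*Mb)) - (u+w+2*Mb)/(4*Mb)
        - fm m ((u+2*Mb)/(4*Mb)) + (u+2*Mb)/(4*Mb)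
        - fm m ((w+2*Mb)/(4*Mb)) + (w+2*Mb)/(4*Mb)) - 2*Mb^2 - u*w|
      ≤ 4*Mb^2*(1/4)^m := by
  have hMb0 : (0:ℝ) < Mb := by linarith
  have h4 : (0:ℝ) < 4*Mb := by linarith
  have hu' := abs_le.1 hu
  have hw' := abs_le.1 hw
  have htA : (u+w+2*Mb)/(4*Mb) ∈ Set.Icc (0:ℝ) 1 :=
    ⟨div_nonneg (by linarith) (by linarith), (div_le_one h4).2 (by linarith)⟩
  have htB : (u+2*Mb)/(4*Mb) ∈ Set.Icc (0:ℝ) 1 :=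
    ⟨div_nonneg (by linarith) (by linarith), (div_le_one h4).2 (by linarith)⟩
  have htC : (w+2*Mb)/(4*Mb) ∈ Set.Icc (0:ℝ) 1 :=
    ⟨div_nonneg (by linarith) (by linarith), (div_le_one h4).2 (by linarith)⟩
  have EA := fm_sq_bound m _ htA
  have EB := fm_sq_bound m _ htB
  have EC := fm_sq_bound m _ htC
  obtain ⟨EA1, EA2⟩ := EA
  obtain ⟨EB1, EB2⟩ := EB
  obtain ⟨EC1, EC2⟩ := EC
  have key : 8*Mb^2*(((u+w+2*Mb)/(4*Mb))^2 - (u+w+2*Mb)/(4*Mb)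
      - ((u+2*Mb)/(4*Mb))^2 + (u+2*Mb)/(4*Mb)
      - ((w+2*Mb)/(4*Mb))^2 + (w+2*Mb)/(4*Mb)) - 2*Mb^2 = u*w := by
    field_simp
    ring
  have hre : 8*Mb^2*(fm m ((u+w+2*Mb)/(4*Mb)) - (u+w+2*Mb)/(4*Mb)
        - fm m ((u+2*Mb)/(4*Mb)) + (u+2*Mb)/(4*Mb)
        - fm m ((w+2*Mb)/(4*Mb)) + (w+2*Mb)/(4*Mb)) - 2*Mb^2 - u*w
      = 8*Mb^2*((fm m ((u+w+2*Mb)/(4*Mb)) - ((u+w+2*Mb)/(4*Mb))^2)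
        - (fm m ((u+2*Mb)/(4*Mb)) - ((u+2*Mb)/(4*Mb))^2)
        - (fm m ((w+2*Mb)/(4*Mb)) - ((w+2*Mb)/(4*Mb))^2)) := by
    linear_combination key
  rw [hre, abs_mul, abs_of_nonneg (by positivity : (0:ℝ) ≤ 8*Mb^2)]
  have habs : |(fm m ((u+w+2*Mb)/(4*Mb)) - ((u+w+2*Mb)/(4*Mb))^2)
        - (fm m ((u+2*Mb)/(4*Mb)) - ((u+2*Mb)/(4*Mb))^2)
        - (fm m ((w+2*Mb)/(4*Mb)) - ((w+2*Mb)/(4*Mb))^2)| ≤ 2*(1/4)^(m+1) := by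
    rw [abs_le]
    constructor <;> linarith
  calc 8*Mb^2 * |(fm m ((u+w+2*Mb)/(4*Mb)) - ((u+w+2*Mb)/(4*Mb))^2)
        - (fm m ((u+2*Mb)/(4*Mb)) - ((u+2*Mb)/(4*Mb))^2)
        - (fm m ((w+2*Mb)/(4*Mb)) - ((w+2*Mb)/(4*Mb))^2)|
      ≤ 8*Mb^2 * (2*(1/4)^(m+1)) := by
        exact mul_le_mul_of_nonneg_left habs (by positivity)
    _ = 4*Mb^2*(1/4)^m := by
        rw [pow_succ]
        ring

lemma wv_err (hMb : (1:ℝ) ≤ Mb) (m : ℕ) {j : ℕ}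
    (hu : |v (2*j)| ≤ Mb) (hw : |v (2*j+1)| ≤ Mb) :
    |wv Mb m v j - v (2*j) * v (2*j+1)| ≤ 4*Mb^2*(1/4)^m := by
  have t0 : tval Mb v j 0 = (v (2*j) + v (2*j+1) + 2*Mb)/(4*Mb) := by simp [tval]
  have t1 : tval Mb v j 1 = (v (2*j) + 2*Mb)/(4*Mb) := by simp [tval]
  have t2 : tval Mb v j 2 = (v (2*j+1) + 2*Mb)/(4*Mb) := by simp [tval]
  unfold wv
  rw [t0, t1, t2]
  exact werr hMb m _ _ hu hw

lemma steps_Inv (hν0 : 0 ≤ ν) (hν1 : ν < 1) (hMb : (1:ℝ) ≤ Mb) (hnd : n ≤ d)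
    (hv : ∀ i < n, |v i| ≤ Mb) (m : ℕ)
    (h : Fin (24*d) → ℝ) (H : Inv d ν Mb n 0 v h) :
    Inv d ν Mb n m v
      (evalL ν ((List.range m).map fun k => mkL (stepRows d ν k) (stepBias d)) h) := by
  induction m with
  | zero => simpa [evalL] using H
  | succ m ih =>
    rw [List.range_succ, List.map_append, evalL_append]
    have := step_Inv hν0 hν1 hMb hnd hv _ ih
    simpa [evalL] using this

lemma level_core (hν0 : 0 ≤ ν) (hν1 : ν < 1) (hMb : (1:ℝ) ≤ Mb) {n m : ℕ}
    (hn2 : 2 ≤ n) (hnd : n ≤ d)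
    (hv : ∀ i < n, |v i| ≤ Mb)
    (hprod : ∀ j, 2*j+1 < n → |v (2*j) * v (2*j+1)| ≤ Mb - 1)
    (hδ : 4*Mb^2*(1/4)^m ≤ 1)
    (h : Fin (24*d) → ℝ) (H0 : Inv d ν Mb n 0 v h) :
    ∃ v' : ℕ → ℝ,
      (∀ i < (n+1)/2, evalL ν
          (((List.range m).map fun k => mkL (stepRows d ν k) (stepBias d))
            ++ [mkL (combRows d Mb n) (combBias d Mb n)]) h (fidx d (16*i)) = v' i + Mb) ∧
      (∀ j, 2*j+1 < n → |v' j - v (2*j) * v (2*j+1)| ≤ 4*Mb^2*(1/4)^m) ∧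
      (n % 2 = 1 → v' (n/2) = v (n-1)) ∧
      (∀ i < (n+1)/2, |v' i| ≤ Mb) := by
  have hwerr : ∀ j, 2*j+1 < n → |wv Mb m v j - v (2*j) * v (2*j+1)| ≤ 4*Mb^2*(1/4)^m :=
    fun j hjn => wv_err hMb m (hv _ (by omega)) (hv _ (by omega))
  have hwbd : ∀ j, 2*j+1 < n → |wv Mb m v j| ≤ Mb := by
    intro j hjn
    have h1 := hwerr j hjn
    have h2 := hprod j hjn
    have h3 := abs_le.1 h1
    have h4 := abs_le.1 h2
    rw [abs_le]
    constructor <;> linarith [h3.1, h3.2, h4.1, h4.2]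
  refine ⟨fun i => if 2*i+1 < n then wv Mb m v i else v (n-1), ?_, ?_, ?_, ?_⟩
  · intro i hi
    have hL : evalL ν (((List.range m).map fun k => mkL (stepRows d ν k) (stepBias d))
            ++ [mkL (combRows d Mb n) (combBias d Mb n)]) h
        = step ν (evalL ν ((List.range m).map fun k => mkL (stepRows d ν k) (stepBias d)) h)
          (mkL (combRows d Mb n) (combBias d Mb n)) := by
      rw [evalL_append]
      simp [evalL]
    have Hm := steps_Inv hν0 hν1 hMb hnd hv m _ H0
    have hnwv : ∀ j < n/2, 0 ≤ wv Mb m v j + Mb := by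
      intro j hj
      have := abs_le.1 (hwbd j (by omega))
      linarith [this.1]
    have hvn : n % 2 = 1 → 0 ≤ v (n-1) + Mb := by
      intro hodd
      have := abs_le.1 (hv (n-1) (by omega))
      linarith [this.1]
    have HC := comb_out hν1.le hnd (by omega) hnwv hvn _ Hm
    beta_reduce
    by_cases hpair : 2*i+1 < n
    · rw [hL, if_pos hpair]
      exact HC.1 i (by omega)
    · have hodd : n % 2 = 1 := by omega
      have hieq : i = n/2 := by omega
      rw [hL, if_neg hpair, hieq]
      exact HC.2 hodd
  · intro j hjn
    beta_reduce
    rw [if_pos hjn]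
    exact hwerr j hjn
  · intro hodd
    beta_reduce
    rw [if_neg (by omega)]
  · intro i hi
    beta_reduce
    by_cases hpair : 2*i+1 < n
    · rw [if_pos hpair]
      exact hwbd i hpair
    · rw [if_neg hpair]
      exact hv (n-1) (by omega)

lemma level_spec (hν0 : 0 ≤ ν) (hν1 : ν < 1) (hMb : (1:ℝ) ≤ Mb) {n m : ℕ}
    (hn2 : 2 ≤ n) (hnd : n ≤ d)
    (hv : ∀ i < n, |v i| ≤ Mb)
    (hprod : ∀ j, 2*j+1 < n → |v (2*j) * v (2*j+1)| ≤ Mb - 1)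
    (hδ : 4*Mb^2*(1/4)^m ≤ 1)
    (h : Fin (24*d) → ℝ) (hslots : ∀ i < n, h (fidx d (16*i)) = v i + Mb) :
    ∃ v' : ℕ → ℝ,
      (∀ i < (n+1)/2, evalL ν (levelL d ν Mb n m) h (fidx d (16*i)) = v' i + Mb) ∧
      (∀ j, 2*j+1 < n → |v' j - v (2*j) * v (2*j+1)| ≤ 4*Mb^2*(1/4)^m) ∧
      (n % 2 = 1 → v' (n/2) = v (n-1)) ∧
      (∀ i < (n+1)/2, |v' i| ≤ Mb) := by
  have H0 := init_Inv hν1.le hMb hnd (by omega) hv h hslots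
  obtain ⟨v', h1, h2, h3, h4⟩ := level_core hν0 hν1 hMb hn2 hnd hv hprod hδ _ H0
  refine ⟨v', ?_, h2, h3, h4⟩
  intro i hi
  have : evalL ν (levelL d ν Mb n m) h
      = evalL ν (((List.range m).map fun k => mkL (stepRows d ν k) (stepBias d))
          ++ [mkL (combRows d Mb n) (combBias d Mb n)])
        (step ν h (mkL (initRows d Mb n) (initBias d n))) := by
    unfold levelL
    rw [evalL_cons]
  rw [this]
  exact h1 i hi

end LevelLemmas

/-! ### Tree bookkeeping: slot counts, leaf products, error recursion -/

def nAt (d k : ℕ) : ℕ := (d-1)/2^k + 1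

lemma nAt_zero (d : ℕ) (hd : 1 ≤ d) : nAt d 0 = d := by simp [nAt]; omega

lemma nAt_succ (d k : ℕ) : nAt d (k+1) = (nAt d k + 1)/2 := by
  unfold nAt
  rw [pow_succ, ← Nat.div_div_eq_div_mul]
  omega

lemma nAt_le (d k : ℕ) (hd : 1 ≤ d) : nAt d k ≤ d := by
  unfold nAt
  have : (d-1)/2^k ≤ d - 1 := Nat.div_le_self _ _
  omega

lemma nAt_two_le (d k : ℕ) (h : 2^k < d) : 2 ≤ nAt d k := by
  unfold nAt
  have hp : 0 < 2^k := by positivity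
  have h1 : 1 ≤ (d-1)/2^k := (Nat.one_le_div_iff hp).2 (by omega)
  omega

lemma nAt_eq_one (d k : ℕ) (h : d ≤ 2^k) (hd : 1 ≤ d) : nAt d k = 1 := by
  unfold nAt
  have : (d-1)/2^k = 0 := Nat.div_eq_of_lt (by omega)
  omega

def fd (d : ℕ) [NeZero d] (x : ℕ) : Fin d :=
  ⟨x % d, Nat.mod_lt _ (Nat.pos_of_ne_zero (NeZero.ne d))⟩

lemma fd_val {d : ℕ} [NeZero d] {x : ℕ} (h : x < d) : (fd d x).1 = x := Nat.mod_eq_of_lt h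

/-- product of the leaves below slot `i` at level `k`. -/
def Pp {d : ℕ} [NeZero d] (x : Fin d → ℝ) (k i : ℕ) : ℝ :=
  ∏ j ∈ Finset.filter (fun j => j / 2^k = i) (Finset.range d), x (fd d j)

lemma Pp_zero {d : ℕ} [NeZero d] (x : Fin d → ℝ) {i : ℕ} (hi : i < d) :
    Pp x 0 i = x (fd d i) := by
  unfold Pp
  have : Finset.filter (fun j => j / 2^0 = i) (Finset.range d) = {i} := by
    ext a
    simp only [Finset.mem_filter, Finset.mem_range, Finset.mem_singleton, pow_zero,
      Nat.div_one]
    omega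
  rw [this, Finset.prod_singleton]

lemma Pp_pair {d : ℕ} [NeZero d] (x : Fin d → ℝ) (k i : ℕ) :
    Pp x (k+1) i = Pp x k (2*i) * Pp x k (2*i+1) := by
  unfold Pp
  rw [← Finset.prod_union]
  · congr 1
    ext a
    simp only [Finset.mem_filter, Finset.mem_range, Finset.mem_union]
    have hdiv : a / 2^(k+1) = a / 2^k / 2 := by
      rw [pow_succ, Nat.div_div_eq_div_mul]
    constructor
    · rintro ⟨ha, hq⟩
      rw [hdiv] at hq
      rcases Nat.lt_or_ge (a / 2^k) (2*i+1) with h | h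
      · left; exact ⟨ha, by omega⟩
      · right; exact ⟨ha, by omega⟩
    · rintro (⟨ha, hq⟩ | ⟨ha, hq⟩) <;> exact ⟨ha, by rw [hdiv]; omega⟩
  · rw [Finset.disjoint_filter]
    intro a _ h1
    omega

lemma Pp_one {d : ℕ} [NeZero d] (x : Fin d → ℝ) {k i : ℕ} (hi : nAt d k ≤ i) :
    Pp x k i = 1 := by
  unfold Pp
  rw [Finset.filter_false_of_mem, Finset.prod_empty]
  intro a ha
  rw [Finset.mem_range] at ha
  have : a / 2^k ≤ (d-1)/2^k := Nat.div_le_div_right (by omega)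
  unfold nAt at hi
  omega

lemma Pp_abs_le {d : ℕ} [NeZero d] {a : ℝ} (ha : 1 ≤ a) (x : Fin d → ℝ)
    (hx : ∀ i, |x i| ≤ a) (k i : ℕ) : |Pp x k i| ≤ a^d := by
  unfold Pp
  rw [Finset.abs_prod]
  calc ∏ j ∈ Finset.filter (fun j => j / 2^k = i) (Finset.range d), |x (fd d j)|
      ≤ ∏ _j ∈ Finset.filter (fun j => j / 2^k = i) (Finset.range d), a := by
        apply Finset.prod_le_prod
        · intro j _; exact abs_nonneg _
        · intro j _; exact hx _
    _ = a ^ (Finset.filter (fun j => j / 2^k = i) (Finset.range d)).card :=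
        Finset.prod_const a
    _ ≤ a^d := by
        apply pow_le_pow_right₀ ha
        calc (Finset.filter (fun j => j / 2^k = i) (Finset.range d)).card
            ≤ (Finset.range d).card := Finset.card_filter_le _ _
          _ = d := Finset.card_range d

lemma Pp_final {d : ℕ} [NeZero d] (x : Fin d → ℝ) {k : ℕ} (hk : d ≤ 2^k) :
    Pp x k 0 = ∏ i, x i := by
  unfold Pp
  have : Finset.filter (fun j => j / 2^k = 0) (Finset.range d) = Finset.range d := by
    apply Finset.filter_true_of_mem
    intro a ha
    rw [Finset.mem_range] at ha
    exact Nat.div_eq_of_lt (by omega)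
  rw [this]
  rw [← Fin.prod_univ_eq_prod_range (fun j => x (fd d j)) d]
  apply Finset.prod_congr rfl
  intro i _
  congr 1
  apply Fin.ext
  simp [fd, Nat.mod_eq_of_lt i.isLt]

/-- error accumulated after `k` levels. -/
def eps (Mb : ℝ) (m : ℕ) : ℕ → ℝ
  | 0 => 0
  | (k+1) => 2*Mb * eps Mb m k + 4*Mb^2*(1/4)^m

lemma eps_nonneg {Mb : ℝ} (hMb : 1 ≤ Mb) (m : ℕ) : ∀ k, 0 ≤ eps Mb m k := by
  intro k
  induction k with
  | zero => simp [eps]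
  | succ k ih =>
    have : (0:ℝ) ≤ 4*Mb^2*(1/4)^m := by positivity
    simp only [eps]
    nlinarith

lemma eps_mono {Mb : ℝ} (hMb : 1 ≤ Mb) (m : ℕ) {k l : ℕ} (hkl : k ≤ l) :
    eps Mb m k ≤ eps Mb m l := by
  induction l with
  | zero => simp_all
  | succ l ih =>
    rcases Nat.lt_or_ge k (l+1) with h | h
    · have h1 := ih (by omega)
      have h2 := eps_nonneg hMb m l
      have : (0:ℝ) ≤ 4*Mb^2*(1/4)^m := by positivity
      simp only [eps]
      nlinarith
    · have : k = l + 1 := by omega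
      subst this
      rfl

lemma eps_bound {Mb : ℝ} (hMb : 1 ≤ Mb) (m : ℕ) : ∀ k,
    eps Mb m k ≤ (2*Mb+1)^k * (4*Mb^2*(1/4)^m) := by
  intro k
  induction k with
  | zero => simp [eps]; positivity
  | succ k ih =>
    simp only [eps, pow_succ]
    have h1 : (0:ℝ) ≤ 4*Mb^2*(1/4)^m := by positivity
    have h2 : (1:ℝ) ≤ (2*Mb+1)^k := one_le_pow₀ (by linarith)
    nlinarith

/-! ### The raw first layer -/

def rawBase (d : ℕ) [NeZero d] (Mb : ℝ) (j c : ℕ) : List (ℝ × Fin d) :=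
  if c = 0 then [(1/(4*Mb), fd d (2*j)), (1/(4*Mb), fd d (2*j+1))]
  else if c = 1 then [(1/(4*Mb), fd d (2*j))]
  else [(1/(4*Mb), fd d (2*j+1))]

def rawRows (d : ℕ) [NeZero d] (Mb : ℝ) : Fin (24*d) → List (ℝ × Fin d) := fun i =>
  let j := i.1 / 16
  let t := i.1 % 16
  if t = 0 then (if d % 2 = 1 ∧ j = d - 1 then [((1:ℝ), fd d (d-1))] else [])
  else if j < d/2 then
    (let c := (t-1)/5
     let s := (t-1)%5
     if s = 1 then (rawBase d Mb j c).map (fun p => (-p.1, p.2)) else rawBase d Mb j c)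
  else []

def rawBias (d : ℕ) [NeZero d] (Mb : ℝ) : Fin (24*d) → ℝ := fun i =>
  let j := i.1 / 16
  let t := i.1 % 16
  if t = 0 then (if d % 2 = 1 ∧ j = d - 1 then Mb else 0)
  else if j < d/2 then
    (let s := (t-1)%5
     if s = 0 then 0 else if s = 1 then 0 else 1/2)
  else 0

def raw0 (d : ℕ) [NeZero d] (ν Mb : ℝ) (x : Fin d → ℝ) : Fin (24*d) → ℝ :=
  fun i => lrelu ν ((∑ j, lin (rawRows d Mb i) j * x j) + rawBias d Mb i)

lemma raw0_eq (d : ℕ) [NeZero d] (ν Mb : ℝ) (x : Fin d → ℝ) (i : Fin (24*d)) :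
    raw0 d ν Mb x i
      = lrelu ν (((rawRows d Mb i).map fun p => p.1 * x p.2).sum + rawBias d Mb i) := by
  unfold raw0
  rw [sum_lin]

section RawEval

variable {d : ℕ} [NeZero d] {j c : ℕ} {ν Mb : ℝ} {x : Fin d → ℝ}

lemma rawBase_sum (hMb : (1:ℝ) ≤ Mb) (x : Fin d → ℝ) (hj : 2*j+1 < d) :
    ((rawBase d Mb j c).map fun p => p.1 * x p.2).sum + 1/2
      = tval Mb (fun i => x (fd d i)) j c := by
  have hMb0 : Mb ≠ 0 := by linarith
  by_cases hc0 : c = 0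
  · subst hc0
    simp only [rawBase, tval, eq_self_iff_true, ite_true, List.map_cons, List.map_nil,
      List.sum_cons, List.sum_nil]
    field_simp
    ring
  by_cases hc1 : c = 1
  · subst hc1
    simp only [rawBase, tval, Nat.one_ne_zero, eq_self_iff_true, ite_true, ite_false,
      List.map_cons, List.map_nil, List.sum_cons, List.sum_nil]
    field_simp
    ring
  · simp only [rawBase, tval, hc0, hc1, ite_false, List.map_cons, List.map_nil,
      List.sum_cons, List.sum_nil]
    field_simp
    ring

lemma raw_eval_s0 (hj : j < d) (hjn : j < d/2) (hc : c < 3) :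
    raw0 d ν Mb x (fidx d (16*j+1+5*c))
      = lrelu ν ((((rawBase d Mb j c).map fun p => p.1 * x p.2).sum + 1/2) - 1/2) := by
  have hX : (fidx d (16*j+1+5*c)).1 = 16*j+1+5*c := fidx_val d (by omega)
  rw [raw0_eq]
  simp only [rawRows, rawBias, hX]
  have h1 : (16*j+1+5*c) % 16 = 1+5*c := by omega
  have h2 : (16*j+1+5*c) / 16 = j := by omega
  have h3 : (1+5*c-1)/5 = c := by omega
  have h4 : (1+5*c-1)%5 = 0 := by omega
  simp only [h1, h2, h3, h4, if_pos hjn]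
  norm_num

lemma raw_eval_s1 (hj : j < d) (hjn : j < d/2) (hc : c < 3) :
    raw0 d ν Mb x (fidx d (16*j+2+5*c))
      = lrelu ν (1/2 - (((rawBase d Mb j c).map fun p => p.1 * x p.2).sum + 1/2)) := by
  have hX : (fidx d (16*j+2+5*c)).1 = 16*j+2+5*c := fidx_val d (by omega)
  rw [raw0_eq]
  simp only [rawRows, rawBias, hX]
  have h1 : (16*j+2+5*c) % 16 = 2+5*c := by omega
  have h2 : (16*j+2+5*c) / 16 = j := by omega
  have h3 : (2+5*c-1)/5 = c := by omega
  have h4 : (2+5*c-1)%5 = 1 := by omega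
  have h5 : ¬((2+5*c) = 0) := by omega
  simp only [h1, h2, h3, h4, if_pos hjn, ite_true, if_neg h5]
  rw [negmap_sum]
  norm_num

lemma raw_eval_s234 {s : ℕ} (hs : 2 ≤ s) (hs5 : s ≤ 4) (hj : j < d) (hjn : j < d/2)
    (hc : c < 3) :
    raw0 d ν Mb x (fidx d (16*j+(s+1)+5*c))
      = lrelu ν (((rawBase d Mb j c).map fun p => p.1 * x p.2).sum + 1/2) := by
  have hX : (fidx d (16*j+(s+1)+5*c)).1 = 16*j+(s+1)+5*c := fidx_val d (by omega)
  rw [raw0_eq]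
  simp only [rawRows, rawBias, hX]
  have h1 : (16*j+(s+1)+5*c) % 16 = (s+1)+5*c := by omega
  have h2 : (16*j+(s+1)+5*c) / 16 = j := by omega
  have h3 : ((s+1)+5*c-1)/5 = c := by omega
  have h4 : ((s+1)+5*c-1)%5 = s := by omega
  have h5 : ¬((s+1)+5*c = 0) := by omega
  have h6 : ¬(s = 0) := by omega
  have h7 : ¬(s = 1) := by omega
  simp only [h1, h2, h3, h4, if_pos hjn, if_neg h5, if_neg h6, if_neg h7]

lemma raw_eval_pass (hodd : d % 2 = 1) (hd1 : 1 ≤ d) :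
    raw0 d ν Mb x (fidx d (16*(d-1)))
      = lrelu ν (x (fd d (d-1)) + Mb) := by
  have hX : (fidx d (16*(d-1))).1 = 16*(d-1) := fidx_val d (by omega)
  rw [raw0_eq]
  simp only [rawRows, rawBias, hX]
  have h1 : (16*(d-1)) % 16 = 0 := by omega
  have h2 : (16*(d-1)) / 16 = d-1 := by omega
  simp only [h1, h2, if_pos rfl, hodd]
  norm_num

lemma raw_Inv (hν1 : ν ≤ 1) (hMb : (1:ℝ) ≤ Mb) (hd2 : 2 ≤ d)
    (hx : ∀ i, |x i| ≤ Mb) :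
    Inv d ν Mb d 0 (fun i => x (fd d i)) (raw0 d ν Mb x) := by
  have hv : ∀ i0, |x (fd d i0)| ≤ Mb := fun i0 => hx _
  constructor
  · intro j hj c hc
    have hjd : j < d := by omega
    have hpair : 2*j+1 < d := by omega
    have hbs := rawBase_sum (c := c) hMb x hpair
    have hmem : tval Mb (fun i => x (fd d i)) j c ∈ Set.Icc (0:ℝ) 1 :=
      tval_mem hMb (hv _) (hv _)
    have e2 : (16*j+3+5*c) = 16*j+(2+1)+5*c := by ring
    have e3 : (16*j+4+5*c) = 16*j+(3+1)+5*c := by ring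
    have e4 : (16*j+5+5*c) = 16*j+(4+1)+5*c := by ring
    refine ⟨?_, ?_, ?_, ?_, ?_⟩
    · rw [raw_eval_s0 (ν := ν) (Mb := Mb) (x := x) hjd hj hc, hbs]
      simp
    · rw [raw_eval_s1 (ν := ν) (Mb := Mb) (x := x) hjd hj hc, hbs]
      simp
    · rw [e2, raw_eval_s234 (ν := ν) (Mb := Mb) (x := x) (by norm_num) (by norm_num) hjd hj hc, hbs]
      simp only [Function.iterate_zero, id_eq]
      exact lrelu_of_nonneg hν1 hmem.1
    · rw [e3, raw_eval_s234 (ν := ν) (Mb := Mb) (x := x) (by norm_num) (by norm_num) hjd hj hc, hbs]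
      rw [fm_zero]
      exact lrelu_of_nonneg hν1 hmem.1
    · rw [e4, raw_eval_s234 (ν := ν) (Mb := Mb) (x := x) (by norm_num) (by norm_num) hjd hj hc, hbs]
      exact lrelu_of_nonneg hν1 hmem.1
  · intro hodd
    rw [raw_eval_pass (ν := ν) (Mb := Mb) (x := x) hodd (by omega)]
    have := abs_le.1 (hv (d-1))
    exact lrelu_of_nonneg hν1 (by linarith [this.1])

end RawEval

/-! ### Composing the levels -/

def levels (d : ℕ) [NeZero d] (ν Mb : ℝ) (m : ℕ) : ℕ → ℕ → List (Layer (24*d))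
  | _, 0 => []
  | k, (L+1) => levelL d ν Mb (nAt d k) m ++ levels d ν Mb m (k+1) L

lemma levels_length (d : ℕ) [NeZero d] (ν Mb : ℝ) (m : ℕ) :
    ∀ L k, (levels d ν Mb m k L).length = L * (m + 2) := by
  intro L
  induction L with
  | zero => intro k; simp [levels]
  | succ L ih =>
    intro k
    show (levelL d ν Mb (nAt d k) m ++ levels d ν Mb m (k+1) L).length = _
    rw [List.length_append, levelL_length, ih]
    ring

section LevelsSpec

variable {d : ℕ} [NeZero d] {ν Mb : ℝ}

lemma next_err (hMb : (1:ℝ) ≤ Mb) {m k : ℕ} {v v' : ℕ → ℝ} (x : Fin d → ℝ)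
    (hP : ∀ k' i, |Pp x k' i| ≤ Mb - 2)
    (hvP : ∀ i < nAt d k, |v i - Pp x k i| ≤ eps Mb m k)
    (hw : ∀ j, 2*j+1 < nAt d k → |v' j - v (2*j) * v (2*j+1)| ≤ 4*Mb^2*(1/4)^m)
    (hpass : nAt d k % 2 = 1 → v' (nAt d k / 2) = v (nAt d k - 1))
    (hsmall : 2*Mb * eps Mb m k ≤ 1) (hn2 : 2 ≤ nAt d k) :
    ∀ i < nAt d (k+1), |v' i - Pp x (k+1) i| ≤ eps Mb m (k+1) := by
  intro i hi
  rw [nAt_succ] at hi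
  have heps0 : 0 ≤ eps Mb m k := eps_nonneg hMb m k
  have hepsh : eps Mb m k ≤ 1 := by nlinarith
  by_cases hpair : 2*i+1 < nAt d k
  · have h1 := hw i hpair
    have hu := hvP (2*i) (by omega)
    have hv' := hvP (2*i+1) (by omega)
    have hPu := hP k (2*i)
    have hPv := hP k (2*i+1)
    have hub : |v (2*i)| ≤ Mb := by
      have := abs_abs_sub_abs_le_abs_sub (v (2*i)) (Pp x k (2*i))
      have h2 := abs_le.1 hu
      have h3 := abs_le.1 hPu
      rw [abs_le]
      constructor <;> nlinarith [h2.1, h2.2, h3.1, h3.2]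
    have e1 : v' i - Pp x (k+1) i
        = (v' i - v (2*i) * v (2*i+1))
          + (v (2*i) * (v (2*i+1) - Pp x k (2*i+1))
            + Pp x k (2*i+1) * (v (2*i) - Pp x k (2*i))) := by
      rw [Pp_pair]
      ring
    have h4 : |v (2*i) * (v (2*i+1) - Pp x k (2*i+1))| ≤ Mb * eps Mb m k := by
      rw [abs_mul]
      exact mul_le_mul hub hv' (abs_nonneg _) (by linarith)
    have h5 : |Pp x k (2*i+1) * (v (2*i) - Pp x k (2*i))| ≤ Mb * eps Mb m k := by
      rw [abs_mul]
      exact mul_le_mul (le_trans hPv (by linarith)) hu (abs_nonneg _) (by linarith)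
    calc |v' i - Pp x (k+1) i|
        ≤ |v' i - v (2*i) * v (2*i+1)|
          + (|v (2*i) * (v (2*i+1) - Pp x k (2*i+1))|
            + |Pp x k (2*i+1) * (v (2*i) - Pp x k (2*i))|) := by
          rw [e1]
          exact (abs_add_le _ _).trans (by gcongr; exact abs_add_le _ _)
      _ ≤ 4*Mb^2*(1/4)^m + (Mb * eps Mb m k + Mb * eps Mb m k) := by gcongr
      _ = eps Mb m (k+1) := by simp only [eps]; ring
  · have hodd : nAt d k % 2 = 1 := by omega
    have hieq : i = nAt d k / 2 := by omega
    have h2i : 2*(nAt d k / 2) = nAt d k - 1 := by omega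
    have h2i1 : 2*(nAt d k / 2)+1 = nAt d k := by omega
    rw [hieq, Pp_pair, h2i1, h2i, Pp_one x (le_refl _), mul_one, hpass hodd]
    calc |v (nAt d k - 1) - Pp x k (nAt d k - 1)| ≤ eps Mb m k :=
          hvP _ (by omega)
      _ ≤ eps Mb m (k+1) := eps_mono hMb m (by omega)

lemma levels_spec (hν0 : 0 ≤ ν) (hν1 : ν < 1) (hMb : (1:ℝ) ≤ Mb) {m : ℕ} (x : Fin d → ℝ)
    (hP : ∀ k' i, |Pp x k' i| ≤ Mb - 2)
    (hδ : 4*Mb^2*(1/4)^m ≤ 1) :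
    ∀ (L k : ℕ) (v : ℕ → ℝ) (h : Fin (24*d) → ℝ),
      (∀ i < nAt d k, h (fidx d (16*i)) = v i + Mb) →
      (∀ i < nAt d k, |v i - Pp x k i| ≤ eps Mb m k) →
      (2*Mb * eps Mb m (k+L) ≤ 1) →
      (∀ k', k' < k + L → 2^k' < d) →
      ∃ v' : ℕ → ℝ,
        (∀ i < nAt d (k+L), evalL ν (levels d ν Mb m k L) h (fidx d (16*i)) = v' i + Mb) ∧
        (∀ i < nAt d (k+L), |v' i - Pp x (k+L) i| ≤ eps Mb m (k+L)) := by
  intro L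
  induction L with
  | zero =>
    intro k v h hs he _ _
    exact ⟨v, by simpa [levels, evalL] using hs, by simpa using he⟩
  | succ L ih =>
    intro k v h hs he hsmall hpow
    have hn2 : 2 ≤ nAt d k := nAt_two_le d k (hpow k (by omega))
    have hd2 : 2 ≤ d := by
      have := hpow k (by omega)
      have h2 : 1 ≤ 2^k := Nat.one_le_two_pow
      omega
    have hnd : nAt d k ≤ d := nAt_le d k (by omega)
    have hsm_k : 2*Mb * eps Mb m k ≤ 1 := by
      calc 2*Mb * eps Mb m k ≤ 2*Mb * eps Mb m (k+(L+1)) := by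
            apply mul_le_mul_of_nonneg_left (eps_mono hMb m (by omega)) (by linarith)
        _ ≤ 1 := hsmall
    have heps0 : 0 ≤ eps Mb m k := eps_nonneg hMb m k
    have hepsh : eps Mb m k ≤ 1 := by nlinarith
    have hv : ∀ i < nAt d k, |v i| ≤ Mb := by
      intro i hi
      have h1 := abs_le.1 (he i hi)
      have h2 := abs_le.1 (hP k i)
      rw [abs_le]
      constructor <;> nlinarith [h1.1, h1.2, h2.1, h2.2]
    have hprod : ∀ j, 2*j+1 < nAt d k → |v (2*j) * v (2*j+1)| ≤ Mb - 1 := by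
      intro j hjn
      have hu := he (2*j) (by omega)
      have hv' := he (2*j+1) (by omega)
      have hPu := hP k (2*j)
      have hPv := hP k (2*j+1)
      have hub := hv (2*j) (by omega)
      have hPp : |Pp x k (2*j) * Pp x k (2*j+1)| ≤ Mb - 2 := by
        rw [← Pp_pair]
        exact hP (k+1) j
      have h4 : |v (2*j) * (v (2*j+1) - Pp x k (2*j+1))| ≤ Mb * eps Mb m k := by
        rw [abs_mul]
        exact mul_le_mul hub hv' (abs_nonneg _) (by linarith)
      have h5 : |Pp x k (2*j+1) * (v (2*j) - Pp x k (2*j))| ≤ Mb * eps Mb m k := by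
        rw [abs_mul]
        exact mul_le_mul (le_trans hPv (by linarith)) hu (abs_nonneg _) (by linarith)
      have e1 : v (2*j) * v (2*j+1)
          = (v (2*j) * (v (2*j+1) - Pp x k (2*j+1))
              + Pp x k (2*j+1) * (v (2*j) - Pp x k (2*j)))
            + Pp x k (2*j) * Pp x k (2*j+1) := by ring
      calc |v (2*j) * v (2*j+1)|
          ≤ |v (2*j) * (v (2*j+1) - Pp x k (2*j+1))|
              + |Pp x k (2*j+1) * (v (2*j) - Pp x k (2*j))|
            + |Pp x k (2*j) * Pp x k (2*j+1)| := by
            rw [e1]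
            exact (abs_add_le _ _).trans (by gcongr; exact abs_add_le _ _)
        _ ≤ Mb * eps Mb m k + Mb * eps Mb m k + (Mb - 2) := by gcongr
        _ ≤ Mb - 1 := by nlinarith
    obtain ⟨v₁, hv₁s, hv₁e, hv₁p, hv₁b⟩ :=
      level_spec hν0 hν1 hMb hn2 hnd hv hprod hδ h hs
    have hs₁ : ∀ i < nAt d (k+1),
        (evalL ν (levelL d ν Mb (nAt d k) m) h) (fidx d (16*i)) = v₁ i + Mb := by
      rw [nAt_succ]
      exact hv₁s
    have he₁ : ∀ i < nAt d (k+1), |v₁ i - Pp x (k+1) i| ≤ eps Mb m (k+1) :=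
      next_err hMb x hP he hv₁e hv₁p hsm_k hn2
    have hkL : k + (L+1) = (k+1) + L := by omega
    obtain ⟨v', hv's, hv'e⟩ := ih (k+1) v₁ _ hs₁ he₁
      (by rw [← hkL]; exact hsmall) (fun k' hk' => hpow k' (by omega))
    refine ⟨v', ?_, ?_⟩
    · intro i hi
      rw [hkL] at hi
      rw [show levels d ν Mb m k (L+1)
          = levelL d ν Mb (nAt d k) m ++ levels d ν Mb m (k+1) L from rfl,
        evalL_append]
      exact hv's i hi
    · intro i hi
      rw [hkL] at hi ⊢
      exact hv'e i hi

end LevelsSpec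

/-! ### Bounds on all weights and biases -/

def Bc (ν Mb : ℝ) : ℝ := 48*Mb^2 + 8/(1-ν^2) + 2*Mb^2 + Mb + 8

section Bounds

variable {d : ℕ} [NeZero d] {ν Mb : ℝ}

lemma Bc_facts (hν0 : 0 ≤ ν) (hν1 : ν < 1) (hMb : (1:ℝ) ≤ Mb) :
    8/(1-ν^2) + 3 ≤ Bc ν Mb ∧ 48*Mb^2 ≤ Bc ν Mb ∧ 2*Mb^2 + Mb ≤ Bc ν Mb ∧
      (1:ℝ) ≤ Bc ν Mb ∧ Mb ≤ Bc ν Mb := by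
  have h1 : (0:ℝ) < 1 - ν^2 := by nlinarith
  have h2 : (0:ℝ) < 8/(1-ν^2) := by positivity
  unfold Bc
  refine ⟨by nlinarith, by nlinarith, by nlinarith, by nlinarith, by nlinarith⟩

lemma Bc_pos (hν0 : 0 ≤ ν) (hν1 : ν < 1) (hMb : (1:ℝ) ≤ Mb) : 0 < Bc ν Mb :=
  lt_of_lt_of_le one_pos (Bc_facts hν0 hν1 hMb).2.2.2.1

lemma negmap_abs_sum {s : ℕ} (l : List (ℝ × Fin s)) :
    ((l.map fun p => (-p.1, p.2)).map fun p => |p.1|).sum = (l.map fun p => |p.1|).sum := by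
  induction l with
  | nil => simp
  | cons p l ih => simp only [List.map_cons, List.sum_cons, ih, abs_neg]

lemma tvRows_abs (hMb : (1:ℝ) ≤ Mb) (j c : ℕ) :
    ((tvRows d Mb j c).map fun p => |p.1|).sum ≤ 1 := by
  have h1 : |1/(4*Mb)| ≤ 1/4 := by
    rw [abs_of_nonneg (by positivity), div_le_div_iff₀ (by linarith) (by norm_num)]
    linarith
  unfold tvRows
  split_ifs <;> simp only [List.map_cons, List.map_nil, List.sum_cons, List.sum_nil,
    add_zero] <;> linarith

lemma rawBase_abs (hMb : (1:ℝ) ≤ Mb) (j c : ℕ) :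
    ((rawBase d Mb j c).map fun p => |p.1|).sum ≤ 1 := by
  have h1 : |1/(4*Mb)| ≤ 1/4 := by
    rw [abs_of_nonneg (by positivity), div_le_div_iff₀ (by linarith) (by norm_num)]
    linarith
  unfold rawBase
  split_ifs <;> simp only [List.map_cons, List.map_nil, List.sum_cons, List.sum_nil,
    add_zero] <;> linarith

lemma bd_step_rows (hν0 : 0 ≤ ν) (hν1 : ν < 1) (hMb : (1:ℝ) ≤ Mb) (k : ℕ)
    (i : Fin (24*d)) :
    ((stepRows d ν k i).map fun p => |p.1|).sum ≤ Bc ν Mb := by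
  obtain ⟨hB1, hB2, hB3, hB4, hB5⟩ := Bc_facts (Mb := Mb) hν0 hν1 hMb
  have h1 : (0:ℝ) < 1 - ν^2 := by nlinarith
  have e1 : |(-4 : ℝ) / (1-ν^2)| = 4/(1-ν^2) := by
    rw [abs_div, abs_of_pos h1]
    norm_num
  have e2 : |(-4 : ℝ) * ν / (1-ν^2)| = 4*ν/(1-ν^2) := by
    rw [abs_div, abs_of_pos h1, abs_mul, abs_of_nonneg hν0]
    norm_num
  have e3 : |(4:ℝ)/(1-ν^2)| = 4/(1-ν^2) := by
    rw [abs_div, abs_of_pos h1]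
    norm_num
  have e4 : |(4:ℝ)*ν/(1-ν^2)| = 4*ν/(1-ν^2) := by
    rw [abs_div, abs_of_pos h1, abs_mul, abs_of_nonneg hν0]
    norm_num
  have hP1 : (1:ℝ) ≤ 4^(k+1) := one_le_pow₀ (by norm_num)
  have e5 : |(4:ℝ)/(1-ν^2)/4^(k+1)| ≤ 4/(1-ν^2) := by
    rw [abs_of_nonneg (by positivity)]
    exact div_le_self (by positivity) hP1
  have e6 : |(4:ℝ)*ν/(1-ν^2)/4^(k+1)| ≤ 4*ν/(1-ν^2) := by
    rw [abs_of_nonneg (by positivity)]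
    exact div_le_self (by positivity) hP1
  have e7 : |(-2:ℝ)/4^(k+1)| ≤ 2 :=
    calc |(-2:ℝ)/4^(k+1)| = 2/4^(k+1) := by
          rw [abs_div, abs_of_pos (show (0:ℝ) < 4^(k+1) by positivity)]
          norm_num
      _ ≤ 2 := div_le_self (by norm_num) hP1
  have a1 : |(1:ℝ)| = 1 := by norm_num
  have a2 : |(2:ℝ)| = 2 := by norm_num
  have a3 : |(-2:ℝ)| = 2 := by norm_num
  have hr : 4*ν/(1-ν^2) ≤ 4/(1-ν^2) := by
    gcongr <;> linarith
  have hsum : 4/(1-ν^2) + 4/(1-ν^2) = 8/(1-ν^2) := by ring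
  unfold stepRows
  dsimp only
  split_ifs <;>
    simp only [List.map_cons, List.map_nil, List.sum_cons, List.sum_nil, add_zero,
      e1, e2, e3, e4, a1, a2, a3] <;>
    linarith [e5, e6, e7]

lemma bd_step_bias (hν0 : 0 ≤ ν) (hν1 : ν < 1) (hMb : (1:ℝ) ≤ Mb) (i : Fin (24*d)) :
    |stepBias d i| ≤ Bc ν Mb := by
  have hB4 := (Bc_facts (Mb := Mb) hν0 hν1 hMb).2.2.2.1
  unfold stepBias
  dsimp only
  split_ifs <;> rw [abs_le] <;> constructor <;> norm_num <;> linarith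

lemma bd_init_rows (hν0 : 0 ≤ ν) (hν1 : ν < 1) (hMb : (1:ℝ) ≤ Mb) (n : ℕ)
    (i : Fin (24*d)) :
    ((initRows d Mb n i).map fun p => |p.1|).sum ≤ Bc ν Mb := by
  have hB4 := (Bc_facts (Mb := Mb) hν0 hν1 hMb).2.2.2.1
  have a1 : |(1:ℝ)| = 1 := by norm_num
  unfold initRows
  dsimp only
  split_ifs <;>
    first
    | (simp only [List.map_cons, List.map_nil, List.sum_cons, List.sum_nil, add_zero, a1]
       linarith)
    | (simp only [List.map_nil, List.sum_nil]; linarith)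
    | (rw [negmap_abs_sum]; linarith [tvRows_abs (d := d) hMb (i.1/16) ((i.1%16-1)/5)])
    | (linarith [tvRows_abs (d := d) hMb (i.1/16) ((i.1%16-1)/5)])

lemma bd_init_bias (hν0 : 0 ≤ ν) (hν1 : ν < 1) (hMb : (1:ℝ) ≤ Mb) (n : ℕ)
    (i : Fin (24*d)) :
    |initBias d n i| ≤ Bc ν Mb := by
  have hB4 := (Bc_facts (Mb := Mb) hν0 hν1 hMb).2.2.2.1
  have htv : 0 ≤ tvBias ((i.1%16-1)/5) ∧ tvBias ((i.1%16-1)/5) ≤ 1/4 := by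
    unfold tvBias
    split_ifs <;> norm_num
  unfold initBias
  dsimp only
  split_ifs <;> rw [abs_le] <;> constructor <;> norm_num <;> linarith [htv.1, htv.2]

lemma bd_comb_rows (hν0 : 0 ≤ ν) (hν1 : ν < 1) (hMb : (1:ℝ) ≤ Mb) (n : ℕ)
    (i : Fin (24*d)) :
    ((combRows d Mb n i).map fun p => |p.1|).sum ≤ Bc ν Mb := by
  obtain ⟨hB1, hB2, hB3, hB4, hB5⟩ := Bc_facts (Mb := Mb) hν0 hν1 hMb
  have a1 : |(1:ℝ)| = 1 := by norm_num
  have e1 : |8*Mb^2| = 8*Mb^2 := abs_of_nonneg (by positivity)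
  have e2 : |(-(8*Mb^2))| = 8*Mb^2 := by rw [abs_neg]; exact e1
  unfold combRows
  dsimp only
  split_ifs <;>
    simp only [List.map_cons, List.map_nil, List.sum_cons, List.sum_nil, add_zero,
      a1, neg_mul, e1, e2] <;>
    linarith

lemma bd_comb_bias (hν0 : 0 ≤ ν) (hν1 : ν < 1) (hMb : (1:ℝ) ≤ Mb) (n : ℕ)
    (i : Fin (24*d)) :
    |combBias d Mb n i| ≤ Bc ν Mb := by
  obtain ⟨hB1, hB2, hB3, hB4, hB5⟩ := Bc_facts (Mb := Mb) hν0 hν1 hMb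
  have hMb2 : (0:ℝ) ≤ Mb^2 := sq_nonneg Mb
  unfold combBias
  split_ifs <;> rw [abs_le] <;> constructor <;> nlinarith

lemma bd_raw_rows (hν0 : 0 ≤ ν) (hν1 : ν < 1) (hMb : (1:ℝ) ≤ Mb)
    (i : Fin (24*d)) :
    ((rawRows d Mb i).map fun p => |p.1|).sum ≤ Bc ν Mb := by
  have hB4 := (Bc_facts (Mb := Mb) hν0 hν1 hMb).2.2.2.1
  have a1 : |(1:ℝ)| = 1 := by norm_num
  unfold rawRows
  dsimp only
  split_ifs <;>
    first
    | (simp only [List.map_cons, List.map_nil, List.sum_cons, List.sum_nil, add_zero, a1]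
       linarith)
    | (simp only [List.map_nil, List.sum_nil]; linarith)
    | (rw [negmap_abs_sum]; linarith [rawBase_abs (d := d) hMb (i.1/16) ((i.1%16-1)/5)])
    | (linarith [rawBase_abs (d := d) hMb (i.1/16) ((i.1%16-1)/5)])

lemma bd_raw_bias (hν0 : 0 ≤ ν) (hν1 : ν < 1) (hMb : (1:ℝ) ≤ Mb)
    (i : Fin (24*d)) :
    |rawBias d Mb i| ≤ Bc ν Mb := by
  obtain ⟨hB1, hB2, hB3, hB4, hB5⟩ := Bc_facts (Mb := Mb) hν0 hν1 hMb
  unfold rawBias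
  dsimp only
  split_ifs <;> rw [abs_le] <;> constructor <;> norm_num <;> linarith

/-- all layers in the hidden list are bounded. -/
lemma bd_levels (hν0 : 0 ≤ ν) (hν1 : ν < 1) (hMb : (1:ℝ) ≤ Mb) (m : ℕ) :
    ∀ L k, ∀ p ∈ levels d ν Mb m k L,
      (∀ i j, |p.1 i j| ≤ Bc ν Mb) ∧ (∀ i, |p.2 i| ≤ Bc ν Mb) := by
  intro L
  induction L with
  | zero => intro k p hp; simp [levels] at hp
  | succ L ih =>
    intro k p hp
    rw [show levels d ν Mb m k (L+1)
        = levelL d ν Mb (nAt d k) m ++ levels d ν Mb m (k+1) L from rfl,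
      List.mem_append] at hp
    rcases hp with hp | hp
    · unfold levelL at hp
      rcases List.mem_cons.1 hp with hp | hp
      · subst hp
        exact ⟨fun i j => (abs_lin_le _ _).trans (bd_init_rows hν0 hν1 hMb _ i),
          fun i => bd_init_bias hν0 hν1 hMb _ i⟩
      rcases List.mem_append.1 hp with hp | hp
      · obtain ⟨kk, -, hkk⟩ := List.mem_map.1 hp
        subst hkk
        exact ⟨fun i j => (abs_lin_le _ _).trans (bd_step_rows hν0 hν1 hMb _ i),
          fun i => bd_step_bias hν0 hν1 hMb i⟩
      · rcases List.mem_singleton.1 hp with rfl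
        exact ⟨fun i j => (abs_lin_le _ _).trans (bd_comb_rows hν0 hν1 hMb _ i),
          fun i => bd_comb_bias hν0 hν1 hMb _ i⟩
    · exact ih (k+1) p hp

end Bounds

/-! ### Facts about ⌈log₂ d⌉ -/

lemma two_pow_lt_of_lt_clog {d : ℕ} (hd : 2 ≤ d) {k : ℕ}
    (hk : k < ⌈Real.logb 2 (d:ℝ)⌉₊) : 2^k < d := by
  have h := Nat.lt_ceil.1 hk
  have hd0 : (0:ℝ) < d := by positivity
  have h2 : (2:ℝ)^(k:ℝ) < (2:ℝ)^(Real.logb 2 (d:ℝ)) :=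
    Real.rpow_lt_rpow_of_exponent_lt one_lt_two h
  rw [Real.rpow_logb (by norm_num) (by norm_num) hd0] at h2
  have h3 : ((2^k : ℕ) : ℝ) < (d : ℝ) := by
    rw [Nat.cast_pow]
    calc ((2:ℝ))^k = (2:ℝ)^(k:ℝ) := by rw [Real.rpow_natCast]
      _ < d := h2
  exact_mod_cast h3

lemma le_two_pow_clog {d : ℕ} (hd : 2 ≤ d) : d ≤ 2^(⌈Real.logb 2 (d:ℝ)⌉₊) := by
  have h := Nat.le_ceil (Real.logb 2 (d:ℝ))
  have hd0 : (0:ℝ) < d := by positivity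
  have h2 : (2:ℝ)^(Real.logb 2 (d:ℝ)) ≤ (2:ℝ)^((⌈Real.logb 2 (d:ℝ)⌉₊ : ℕ) : ℝ) :=
    Real.rpow_le_rpow_of_exponent_le one_le_two (by exact_mod_cast h)
  rw [Real.rpow_logb (by norm_num) (by norm_num) hd0] at h2
  have h3 : (d : ℝ) ≤ ((2^(⌈Real.logb 2 (d:ℝ)⌉₊) : ℕ) : ℝ) := by
    rw [Nat.cast_pow]
    calc (d:ℝ) ≤ (2:ℝ)^((⌈Real.logb 2 (d:ℝ)⌉₊ : ℕ) : ℝ) := h2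
      _ = (2:ℝ)^(⌈Real.logb 2 (d:ℝ)⌉₊ : ℕ) := by rw [Real.rpow_natCast]
  exact_mod_cast h3

lemma one_le_clog {d : ℕ} (hd : 2 ≤ d) : 1 ≤ ⌈Real.logb 2 (d:ℝ)⌉₊ := by
  by_contra h
  have h0 : ⌈Real.logb 2 (d:ℝ)⌉₊ = 0 := by omega
  have := le_two_pow_clog hd
  rw [h0] at this
  simp at this
  omega

end PNA

open PNA in
/-- there exist constants `c, c' > 0` (independent of `R`) such that for every
sufficiently large `R` there is a Leaky-ReLU network of depth `R⌈log₂ d⌉`, width `24d` and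
parameters bounded by `c` which computes the product `x ↦ ∏ᵢ x⁽ⁱ⁾` within `c'·4^{−R}` on
`[−a,a]^d`. -/
theorem product_network_approximation (ν : ℝ) (hν0 : 0 ≤ ν) (hν1 : ν < 1)
    (a : ℝ) (ha : 1 ≤ a) (d : ℕ) (hd : 2 ≤ d) :
    ∃ c c' : ℝ, 0 < c ∧ 0 < c' ∧
      ∃ R₀ : ℕ, ∀ R : ℕ, R₀ ≤ R →
        ∃ f : (Fin d → ℝ) → ℝ,
          memDNN ν d (R * ⌈Real.logb 2 d⌉₊) (24 * d) c f ∧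
          ∀ x ∈ cube a d, |f x - ∏ i, x i| ≤ c' / 4 ^ R := by
  classical
  haveI : NeZero d := ⟨by omega⟩
  have had : (1:ℝ) ≤ a^d := one_le_pow₀ ha
  set Mb : ℝ := a^d + 2 with hMbdef
  have hMb : (1:ℝ) ≤ Mb := by rw [hMbdef]; linarith
  set L : ℕ := ⌈Real.logb 2 (d:ℝ)⌉₊ with hLdef
  have hL1 : 1 ≤ L := one_le_clog hd
  set C : ℝ := 2*Mb*((2*Mb+1)^L * (64*Mb^2)) with hCdef
  have hpow1 : (1:ℝ) ≤ (2*Mb+1)^L := one_le_pow₀ (by linarith)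
  refine ⟨Bc ν Mb, (2*Mb+1)^L * (64*Mb^2), Bc_pos hν0 hν1 hMb, by positivity,
    max 2 ⌈C⌉₊, ?_⟩
  intro R hR
  have hR2 : 2 ≤ R := le_trans (le_max_left _ _) hR
  set m : ℕ := R - 2 with hmdef
  have hmR : m + 2 = R := by omega
  have hqR : ((1:ℝ)/4)^R * 4^R = 1 := by rw [← mul_pow]; norm_num
  have hC4R : C ≤ 4^R := by
    calc C ≤ (⌈C⌉₊ : ℝ) := Nat.le_ceil C
      _ ≤ (R:ℝ) := by exact_mod_cast le_trans (le_max_right 2 ⌈C⌉₊) hR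
      _ ≤ 4^R := by
          have h1 := (Nat.lt_pow_self (n := R) (show 1 < 4 by norm_num)).le
          calc (R:ℝ) ≤ ((4^R : ℕ):ℝ) := by exact_mod_cast h1
            _ = 4^R := by push_cast; ring
  have hpowid : ((1:ℝ)/4)^m = 16 * ((1:ℝ)/4)^R := by
    rw [show R = m + 2 from by omega, pow_add]
    ring
  have hK : (1:ℝ) ≤ 2*Mb*((2*Mb+1)^L) := by
    nlinarith [mul_nonneg (by linarith : (0:ℝ) ≤ 2*Mb - 1)
      (by linarith : (0:ℝ) ≤ (2*Mb+1)^L - 1)]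
  have h64C : 64*Mb^2 ≤ C := by
    have hnn : 0 ≤ (2*Mb*((2*Mb+1)^L) - 1) * Mb^2 :=
      mul_nonneg (by linarith) (sq_nonneg Mb)
    rw [hCdef]
    nlinarith [hnn]
  have hδ : 4*Mb^2*((1:ℝ)/4)^m ≤ 1 := by
    rw [hpowid]
    calc 4*Mb^2*(16*((1:ℝ)/4)^R) = (64*Mb^2)*((1/4)^R) := by ring
      _ ≤ 4^R * (1/4)^R := mul_le_mul_of_nonneg_right (le_trans h64C hC4R) (by positivity)
      _ = 1 := by rw [mul_comm]; exact hqR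
  have hepsfin : eps Mb m L ≤ ((2*Mb+1)^L * (64*Mb^2)) * ((1:ℝ)/4)^R := by
    calc eps Mb m L ≤ (2*Mb+1)^L * (4*Mb^2*(1/4)^m) := eps_bound hMb m L
      _ = ((2*Mb+1)^L * (64*Mb^2)) * ((1:ℝ)/4)^R := by rw [hpowid]; ring
  have hsmallL : 2*Mb * eps Mb m L ≤ 1 := by
    calc 2*Mb * eps Mb m L ≤ 2*Mb * (((2*Mb+1)^L * (64*Mb^2)) * ((1:ℝ)/4)^R) :=
          mul_le_mul_of_nonneg_left hepsfin (by linarith)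
      _ = C * ((1:ℝ)/4)^R := by rw [hCdef]; ring
      _ ≤ 4^R * (1/4)^R := mul_le_mul_of_nonneg_right hC4R (by positivity)
      _ = 1 := by rw [mul_comm]; exact hqR
  -- the network
  refine ⟨fun x => LNet.eval ν
    { W0 := fun i j => lin (rawRows d Mb i) j
      b0 := rawBias d Mb
      hid := (((List.range m).map fun k => mkL (stepRows d ν k) (stepBias d))
          ++ [mkL (combRows d Mb (nAt d 0)) (combBias d Mb (nAt d 0))])
        ++ levels d ν Mb m 1 (L-1)
      Wout := fun i => lin [((1:ℝ), fidx d 0)] i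
      bout := -Mb } x, ⟨_, ?_, ⟨?_, ?_, ?_, ?_, ?_⟩, fun x => rfl⟩, ?_⟩
  · -- depth
    simp only [List.length_append, List.length_map, List.length_range,
      levels_length, List.length_cons, List.length_nil]
    have hL' : L - 1 + 1 = L := by omega
    calc m + (0 + 1) + (L-1)*(m+2) + 1 = (m+2)*(L-1+1) := by ring
      _ = (m+2)*L := by rw [hL']
      _ = R * L := by rw [hmR]
  · -- W0 bound
    exact fun i j => (abs_lin_le _ _).trans (bd_raw_rows hν0 hν1 hMb i)
  · exact fun i => bd_raw_bias hν0 hν1 hMb i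
  · -- hidden layers bound
    intro p hp
    rcases List.mem_append.1 hp with hp | hp
    · rcases List.mem_append.1 hp with hp | hp
      · obtain ⟨kk, -, hkk⟩ := List.mem_map.1 hp
        subst hkk
        exact ⟨fun i j => (abs_lin_le _ _).trans (bd_step_rows hν0 hν1 hMb _ i),
          fun i => bd_step_bias hν0 hν1 hMb i⟩
      · rcases List.mem_singleton.1 hp with rfl
        exact ⟨fun i j => (abs_lin_le _ _).trans (bd_comb_rows hν0 hν1 hMb _ i),
          fun i => bd_comb_bias hν0 hν1 hMb _ i⟩
    · exact bd_levels hν0 hν1 hMb m (L-1) 1 p hp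
  · -- Wout bound
    intro i
    refine (abs_lin_le _ _).trans ?_
    simpa using (Bc_facts hν0 hν1 hMb).2.2.2.1
  · -- bout bound
    rw [abs_neg, abs_of_nonneg (by linarith)]
    exact (Bc_facts hν0 hν1 hMb).2.2.2.2
  · -- accuracy
    intro x hx
    have hxa : ∀ i, |x i| ≤ a := fun i => abs_le.2 (Set.mem_Icc.1 (hx i))
    have haad : a ≤ a^d := le_self_pow₀ ha (by omega)
    have hxMb : ∀ i, |x i| ≤ Mb := fun i => (hxa i).trans (by rw [hMbdef]; linarith)
    have hP : ∀ k' i, |Pp x k' i| ≤ Mb - 2 := by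
      intro k' i
      have := Pp_abs_le ha x hxa k' i
      rw [hMbdef]
      linarith
    have H0 : Inv d ν Mb (nAt d 0) 0 (fun i => x (fd d i)) (raw0 d ν Mb x) := by
      rw [nAt_zero d (by omega)]
      exact raw_Inv hν1.le hMb hd hxMb
    have hn20 : 2 ≤ nAt d 0 := by rw [nAt_zero d (by omega)]; exact hd
    have hnd0 : nAt d 0 ≤ d := nAt_le d 0 (by omega)
    have hv0 : ∀ i < nAt d 0, |(fun i => x (fd d i)) i| ≤ Mb := fun i _ => hxMb _
    have hvP0 : ∀ i < nAt d 0,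
        |(fun i => x (fd d i)) i - Pp x 0 i| ≤ eps Mb m 0 := by
      intro i hi
      rw [nAt_zero d (by omega)] at hi
      beta_reduce
      rw [Pp_zero x hi]
      simp [eps]
    have hprod0 : ∀ j, 2*j+1 < nAt d 0 →
        |(fun i => x (fd d i)) (2*j) * (fun i => x (fd d i)) (2*j+1)| ≤ Mb - 1 := by
      intro j hj
      rw [nAt_zero d (by omega)] at hj
      beta_reduce
      rw [← Pp_zero x (show 2*j < d by omega), ← Pp_zero x (show 2*j+1 < d by omega),
        ← Pp_pair]
      linarith [hP 1 j]
    obtain ⟨v₁, hv₁s, hv₁e, hv₁p, hv₁b⟩ :=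
      level_core hν0 hν1 hMb hn20 hnd0 hv0 hprod0 hδ (raw0 d ν Mb x) H0
    have he₁ : ∀ i < nAt d 1, |v₁ i - Pp x 1 i| ≤ eps Mb m 1 :=
      next_err hMb x hP hvP0 hv₁e hv₁p (by simp [eps]) hn20
    have hn1 : nAt d 1 = (nAt d 0 + 1)/2 := nAt_succ d 0
    have hs₁ : ∀ i < nAt d 1,
        (evalL ν (((List.range m).map fun k => mkL (stepRows d ν k) (stepBias d))
          ++ [mkL (combRows d Mb (nAt d 0)) (combBias d Mb (nAt d 0))])
          (raw0 d ν Mb x)) (fidx d (16*i)) = v₁ i + Mb := by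
      intro i hi
      exact hv₁s i (by omega)
    have h1L : 1 + (L - 1) = L := by omega
    obtain ⟨vf, hvfs, hvfe⟩ := levels_spec hν0 hν1 hMb x hP hδ (L-1) 1 v₁ _ hs₁ he₁
      (by rw [h1L]; exact hsmallL)
      (fun k' hk' => two_pow_lt_of_lt_clog hd (by rw [← hLdef]; omega))
    rw [h1L] at hvfs hvfe
    have hnL : nAt d L = 1 := nAt_eq_one d L (by rw [hLdef]; exact le_two_pow_clog hd) (by omega)
    have hvf0 := hvfs 0 (by omega)
    have hvfe0 := hvfe 0 (by omega)
    -- evaluate the network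
    have heval : LNet.eval ν
        { W0 := fun i j => lin (rawRows d Mb i) j
          b0 := rawBias d Mb
          hid := (((List.range m).map fun k => mkL (stepRows d ν k) (stepBias d))
              ++ [mkL (combRows d Mb (nAt d 0)) (combBias d Mb (nAt d 0))])
            ++ levels d ν Mb m 1 (L-1)
          Wout := fun i => lin [((1:ℝ), fidx d 0)] i
          bout := -Mb } x = vf 0 := by
      have e0 : LNet.eval ν
          { W0 := fun i j => lin (rawRows d Mb i) j
            b0 := rawBias d Mb
            hid := (((List.range m).map fun k => mkL (stepRows d ν k) (stepBias d))
                ++ [mkL (combRows d Mb (nAt d 0)) (combBias d Mb (nAt d 0))])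
              ++ levels d ν Mb m 1 (L-1)
            Wout := fun i => lin [((1:ℝ), fidx d 0)] i
            bout := -Mb } x
          = (∑ i, lin [((1:ℝ), fidx d 0)] i *
              (evalL ν ((((List.range m).map fun k => mkL (stepRows d ν k) (stepBias d))
                ++ [mkL (combRows d Mb (nAt d 0)) (combBias d Mb (nAt d 0))])
                ++ levels d ν Mb m 1 (L-1)) (raw0 d ν Mb x)) i) + (-Mb) := rfl
      rw [e0, sum_lin, evalL_append]
      simp only [List.map_cons, List.map_nil, List.sum_cons, List.sum_nil, one_mul, add_zero]
      have : fidx d 0 = fidx d (16*0) := by norm_num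
      rw [this, hvf0]
      ring
    beta_reduce
    rw [heval]
    have hPfin : Pp x L 0 = ∏ i, x i :=
      Pp_final x (by rw [hLdef]; exact le_two_pow_clog hd)
    rw [← hPfin]
    calc |vf 0 - Pp x L 0| ≤ eps Mb m L := hvfe0
      _ ≤ ((2*Mb+1)^L * (64*Mb^2)) * ((1:ℝ)/4)^R := hepsfin
      _ = ((2*Mb+1)^L * (64*Mb^2)) / 4^R := by
          rw [one_div, inv_pow]
          ring
end
end

section
/- Let s > 0 and d ∈ ℕ, and let u_1, …, u_{2^d} be the 2^d vectors in {0, s}^d. For each k and each x ∈ ℝ^d, let c_k(x) be the unique point of the shifted lattice 2sℤ^d + u_k with x − c_k(x) ∈ [0, 2s)^d. Then for every x ∈ ℝ^d, Σ_{k=1}^{2^d} ∏_{j=1}^{d} max(0, 1 − |c_k(x)^{(j)} + s − x^{(j)}|/s) = 1. -/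
private lemma tent_pair (s y a b : ℝ) (hs : 0 < s) (m n : ℤ)
    (ha : a = 2*s*m) (hb : b = 2*s*n + s)
    (h1 : a ≤ y) (h2 : y < a + 2*s) (h3 : b ≤ y) (h4 : y < b + 2*s) :
    max 0 (1 - |a + s - y|/s) + max 0 (1 - |b + s - y|/s) = 1 := by
  have hk : b - a = s * (2*((n:ℝ) - m) + 1) := by rw [ha, hb]; ring
  have hkl : (-2 : ℝ) < 2*((n:ℝ)-m)+1 := by nlinarith
  have hku : (2*((n:ℝ)-m)+1) < 2 := by nlinarith
  have hcase : n - m = 0 ∨ n - m = -1 := by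
    have l : (-2 : ℤ) < 2*(n-m)+1 := by exact_mod_cast (by push_cast; linarith : ((-2:ℤ):ℝ) < ((2*(n-m)+1 : ℤ) : ℝ))
    have u : (2*(n-m)+1 : ℤ) < 2 := by exact_mod_cast (by push_cast; linarith : (((2*(n-m)+1 : ℤ)) : ℝ) < ((2:ℤ):ℝ))
    omega
  rcases hcase with h | h
  · -- b = a + s, y ∈ [a+s, a+2s)
    have hb' : b = a + s := by
      have : ((n:ℝ) - m) = 0 := by exact_mod_cast h
      nlinarith [hk]
    subst hb'
    have e1 : |a + s - y| = y - a - s := by rw [abs_of_nonpos (by linarith)]; ring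
    have e2 : |a + s + s - y| = a + 2*s - y := by rw [abs_of_nonneg (by linarith)]; ring
    rw [e1, e2, max_eq_right, max_eq_right]
    · field_simp
      ring
    · rw [sub_nonneg, div_le_one hs]; linarith
    · rw [sub_nonneg, div_le_one hs]; linarith
  · -- b = a - s, y ∈ [a, a+s)
    have hb' : b = a - s := by
      have : ((n:ℝ) - m) = -1 := by exact_mod_cast h
      nlinarith [hk]
    subst hb'
    have e1 : |a + s - y| = a + s - y := by rw [abs_of_nonneg (by linarith)]
    have e2 : |a - s + s - y| = y - a := by rw [abs_of_nonpos (by linarith)]; ring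
    rw [e1, e2, max_eq_right, max_eq_right]
    · field_simp
      ring
    · rw [sub_nonneg, div_le_one hs]; linarith
    · rw [sub_nonneg, div_le_one hs]; linarith

/-- partition-of-unity identity for products of tent functions. For `s > 0`,
let `u_σ ∈ {0,s}^d` (indexed by `σ : Fin d → Bool`) be the `2^d` shift vectors, and for each
`σ` let `c σ` be the (unique) point of the shifted lattice `2sℤ^d + u_σ` with
`x − c σ ∈ [0, 2s)^d`.  Then the `2^d` products of tent functions centered at the midpoints
`c σ + s·𝟙` sum to one. -/
theorem tent_partition_of_unity (d : ℕ) (s : ℝ) (hs : 0 < s)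
    (x : Fin d → ℝ) (c : (Fin d → Bool) → Fin d → ℝ)
    (hlat : ∀ σ : Fin d → Bool, ∀ j, ∃ m : ℤ, c σ j = 2 * s * m + (if σ j then s else 0))
    (hcell : ∀ σ : Fin d → Bool, ∀ j, c σ j ≤ x j ∧ x j < c σ j + 2 * s) :
    ∑ σ : Fin d → Bool, ∏ j, max 0 (1 - |c σ j + s - x j| / s) = 1 := by
  have hcc : ∀ σ : Fin d → Bool, ∀ j, c σ j = c (fun _ => σ j) j := by
    intro σ j
    obtain ⟨m, hm⟩ := hlat σ j
    obtain ⟨n, hn⟩ := hlat (fun _ => σ j) j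
    obtain ⟨h1, h2⟩ := hcell σ j
    obtain ⟨h3, h4⟩ := hcell (fun _ => σ j) j
    have hd : c σ j - c (fun _ => σ j) j = 2*s*((m:ℝ) - n) := by
      rw [hm, hn]; ring
    have hmn : m = n := by
      have l : ((m:ℝ) - n) < 1 := by nlinarith
      have u : (-1 : ℝ) < (m:ℝ) - n := by nlinarith
      have : (m - n : ℤ) = 0 := by
        have l' : (m - n : ℤ) < 1 := by exact_mod_cast (by push_cast; linarith : ((m-n:ℤ):ℝ) < ((1:ℤ):ℝ))
        have u' : (-1 : ℤ) < m - n := by exact_mod_cast (by push_cast; linarith : (((-1):ℤ):ℝ) < ((m-n:ℤ):ℝ))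
        omega
      omega
    subst hmn
    linarith [hd]
  have hsum : ∀ j, ∑ b : Bool, max 0 (1 - |c (fun _ => b) j + s - x j|/s) = 1 := by
    intro j
    obtain ⟨m, hm⟩ := hlat (fun _ => false) j
    obtain ⟨n, hn⟩ := hlat (fun _ => true) j
    norm_num at hm hn
    rw [Fintype.sum_bool]
    rw [add_comm]
    exact tent_pair s (x j) _ _ hs m n hm hn (hcell _ j).1 (hcell _ j).2
      (hcell _ j).1 (hcell _ j).2
  calc ∑ σ : Fin d → Bool, ∏ j, max 0 (1 - |c σ j + s - x j| / s)
      = ∑ σ : Fin d → Bool, ∏ j, max 0 (1 - |c (fun _ => σ j) j + s - x j| / s) := by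
        refine Finset.sum_congr rfl fun σ _ => Finset.prod_congr rfl fun j _ => ?_
        rw [hcc σ j]
    _ = ∏ j, ∑ b : Bool, max 0 (1 - |c (fun _ => b) j + s - x j| / s) := by
        rw [Finset.prod_univ_sum, Fintype.piFinset_univ]
    _ = ∏ _j : Fin d, (1:ℝ) := Finset.prod_congr rfl fun j _ => hsum j
    _ = 1 := Finset.prod_const_one
end

section
/- Let a ≥ 1, ν ∈ [0,1), L ∈ ℕ, r ∈ ℕ, B ≥ 1 and δ > 0. Let f_{θ_1} and f_{θ_2} be two Leaky-ReLU networks on [−a,a]^d with the same architecture (L, (d, r, …, r, 1)) whose parameter vectors satisfy |θ_1|_∞ ≤ B, |θ_2|_∞ ≤ B and |θ_1 − θ_2|_∞ ≤ δ. Then sup_{x ∈ [−a,a]^d} |f_{θ_1}(x) − f_{θ_2}(x)| ≤ a·(d+1)·(r+1)^L·B^L·(L+1)·δ. -/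
noncomputable section

/-- Corresponding parameters of two networks of the same architecture differ by at most `δ`
(entrywise, i.e. `|θ₁ − θ₂|_∞ ≤ δ`). -/
def LNet.close {d r : ℕ} (n₁ n₂ : LNet d r) (δ : ℝ) : Prop :=
  (∀ i j, |n₁.W0 i j - n₂.W0 i j| ≤ δ) ∧ (∀ i, |n₁.b0 i - n₂.b0 i| ≤ δ) ∧
  (∀ p ∈ n₁.hid.zip n₂.hid,
    (∀ i j, |p.1.1 i j - p.2.1 i j| ≤ δ) ∧ (∀ i, |p.1.2 i - p.2.2 i| ≤ δ)) ∧
  (∀ i, |n₁.Wout i - n₂.Wout i| ≤ δ) ∧ |n₁.bout - n₂.bout| ≤ δ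


/-! ### Auxiliary lemmas -/

lemma lrelu_abs_le {ν : ℝ} (hν0 : 0 ≤ ν) (hν1 : ν ≤ 1) (x : ℝ) : |lrelu ν x| ≤ |x| := by
  unfold lrelu
  rcases le_or_gt 0 x with h | h
  · rw [max_eq_left (by nlinarith)]
  · rw [max_eq_right (by nlinarith), abs_mul, abs_of_nonneg hν0]
    nlinarith [abs_nonneg x]

lemma lrelu_lip {ν : ℝ} (hν0 : 0 ≤ ν) (hν1 : ν ≤ 1) (x y : ℝ) :
    |lrelu ν x - lrelu ν y| ≤ |x - y| := by
  unfold lrelu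
  refine (abs_max_sub_max_le_max x (ν * x) y (ν * y)).trans (max_le le_rfl ?_)
  rw [← mul_sub, abs_mul, abs_of_nonneg hν0]
  nlinarith [abs_nonneg (x - y)]

lemma affine_abs_le {m : ℕ} (W h : Fin m → ℝ) (b B M : ℝ) (hBpos : 0 ≤ B)
    (hW : ∀ j, |W j| ≤ B) (hb : |b| ≤ B) (hh : ∀ j, |h j| ≤ M) :
    |(∑ j, W j * h j) + b| ≤ m * (B * M) + B := by
  have h1 : |∑ j, W j * h j| ≤ (m : ℝ) * (B * M) := by
    calc |∑ j, W j * h j| ≤ ∑ j, |W j * h j| := Finset.abs_sum_le_sum_abs _ _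
      _ ≤ ∑ _j : Fin m, B * M := Finset.sum_le_sum fun j _ => by
            rw [abs_mul]
            exact mul_le_mul (hW j) (hh j) (abs_nonneg _) hBpos
      _ = m * (B * M) := by rw [Finset.sum_const, Finset.card_univ, Fintype.card_fin, nsmul_eq_mul]
  calc |(∑ j, W j * h j) + b| ≤ |∑ j, W j * h j| + |b| := abs_add_le _ _
    _ ≤ m * (B * M) + B := add_le_add h1 hb

lemma affine_diff_le {m : ℕ} (W₁ W₂ h₁ h₂ : Fin m → ℝ) (b₁ b₂ B δ M E : ℝ)
    (hδ : 0 ≤ δ) (hBpos : 0 ≤ B)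
    (hWc : ∀ j, |W₁ j - W₂ j| ≤ δ) (hW₂ : ∀ j, |W₂ j| ≤ B) (hbc : |b₁ - b₂| ≤ δ)
    (hh₁ : ∀ j, |h₁ j| ≤ M) (hE : ∀ j, |h₁ j - h₂ j| ≤ E) :
    |((∑ j, W₁ j * h₁ j) + b₁) - ((∑ j, W₂ j * h₂ j) + b₂)| ≤ m * (δ * M + B * E) + δ := by
  have key : |(∑ j, W₁ j * h₁ j) - (∑ j, W₂ j * h₂ j)| ≤ m * (δ * M + B * E) := by
    rw [← Finset.sum_sub_distrib]
    calc |∑ j, (W₁ j * h₁ j - W₂ j * h₂ j)| ≤ ∑ j, |W₁ j * h₁ j - W₂ j * h₂ j| :=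
          Finset.abs_sum_le_sum_abs _ _
      _ ≤ ∑ _j : Fin m, (δ * M + B * E) := Finset.sum_le_sum fun j _ => by
            have : W₁ j * h₁ j - W₂ j * h₂ j = (W₁ j - W₂ j) * h₁ j + W₂ j * (h₁ j - h₂ j) := by
              ring
            rw [this]
            calc |(W₁ j - W₂ j) * h₁ j + W₂ j * (h₁ j - h₂ j)|
                ≤ |(W₁ j - W₂ j) * h₁ j| + |W₂ j * (h₁ j - h₂ j)| := abs_add_le _ _
              _ ≤ δ * M + B * E := by
                  rw [abs_mul, abs_mul]
                  exact add_le_add (mul_le_mul (hWc j) (hh₁ j) (abs_nonneg _) hδ)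
                    (mul_le_mul (hW₂ j) (hE j) (abs_nonneg _) hBpos)
      _ = m * (δ * M + B * E) := by rw [Finset.sum_const, Finset.card_univ, Fintype.card_fin, nsmul_eq_mul]
  calc |((∑ j, W₁ j * h₁ j) + b₁) - ((∑ j, W₂ j * h₂ j) + b₂)|
      = |((∑ j, W₁ j * h₁ j) - (∑ j, W₂ j * h₂ j)) + (b₁ - b₂)| := by ring_nf
    _ ≤ |(∑ j, W₁ j * h₁ j) - (∑ j, W₂ j * h₂ j)| + |b₁ - b₂| := abs_add_le _ _
    _ ≤ m * (δ * M + B * E) + δ := add_le_add key hbc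

/-- One hidden layer step. -/
def lstep (ν : ℝ) {r : ℕ} (h : Fin r → ℝ) (p : (Fin r → Fin r → ℝ) × (Fin r → ℝ)) :
    Fin r → ℝ :=
  fun i => lrelu ν ((∑ j, p.1 i j * h j) + p.2 i)

lemma fold_bound {r : ℕ} (ν B δ : ℝ) (hν0 : 0 ≤ ν) (hν1 : ν ≤ 1)
    (hB : 1 ≤ B) (hδ : 0 ≤ δ) :
    ∀ (l₁ l₂ : List ((Fin r → Fin r → ℝ) × (Fin r → ℝ))),
    l₁.length = l₂.length →
    (∀ p ∈ l₁, (∀ i j, |p.1 i j| ≤ B) ∧ (∀ i, |p.2 i| ≤ B)) →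
    (∀ p ∈ l₂, (∀ i j, |p.1 i j| ≤ B) ∧ (∀ i, |p.2 i| ≤ B)) →
    (∀ p ∈ l₁.zip l₂, (∀ i j, |p.1.1 i j - p.2.1 i j| ≤ δ) ∧ (∀ i, |p.1.2 i - p.2.2 i| ≤ δ)) →
    ∀ (M₀ D : ℝ), 1 ≤ M₀ → 0 ≤ D →
    ∀ (h₁ h₂ : Fin r → ℝ), (∀ i, |h₁ i| ≤ B * M₀) → (∀ i, |h₁ i - h₂ i| ≤ D) →
    (∀ i, |(l₁.foldl (lstep ν) h₁) i| ≤ ((r + 1) * B) ^ l₁.length * (B * M₀)) ∧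
    (∀ i, |(l₁.foldl (lstep ν) h₁) i - (l₂.foldl (lstep ν) h₂) i| ≤
      ((r + 1) * B) ^ l₁.length * (D + l₁.length * δ * M₀)) := by
  intro l₁
  induction l₁ with
  | nil =>
    intro l₂ hlen _ _ _ M₀ D hM₀ hD h₁ h₂ hh₁ hhD
    have : l₂ = [] := List.length_eq_zero_iff.mp hlen.symm
    subst this
    simp only [List.foldl_nil, List.length_nil, pow_zero, one_mul, Nat.cast_zero,
      zero_mul, add_zero]
    exact ⟨hh₁, hhD⟩
  | cons p₁ t₁ ih =>
    intro l₂ hlen hb₁ hb₂ hc M₀ D hM₀ hD h₁ h₂ hh₁ hhD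
    rcases l₂ with _ | ⟨p₂, t₂⟩
    · simp at hlen
    have hlen' : t₁.length = t₂.length := by simpa using hlen
    have hp₁ := hb₁ p₁ (List.mem_cons_self)
    have hp₂ := hb₂ p₂ (List.mem_cons_self)
    have hpc := hc (p₁, p₂) (by rw [List.zip_cons_cons]; exact List.mem_cons_self)
    set g₁ : Fin r → ℝ := lstep ν h₁ p₁ with hg₁
    set g₂ : Fin r → ℝ := lstep ν h₂ p₂ with hg₂
    have hBpos : (0 : ℝ) ≤ B := by linarith
    have hBM : (1 : ℝ) ≤ B * M₀ := by nlinarith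
    -- magnitude bound after one step
    have hg₁bd : ∀ i, |g₁ i| ≤ B * ((r + 1) * B * M₀) := by
      intro i
      have h1 : |g₁ i| ≤ |(∑ j, p₁.1 i j * h₁ j) + p₁.2 i| := lrelu_abs_le hν0 hν1 _
      have h2 : |(∑ j, p₁.1 i j * h₁ j) + p₁.2 i| ≤ r * (B * (B * M₀)) + B :=
        affine_abs_le _ _ _ _ _ hBpos (hp₁.1 i) (hp₁.2 i) hh₁
      have h3 : (r : ℝ) * (B * (B * M₀)) + B ≤ B * ((r + 1) * B * M₀) := by nlinarith
      linarith
    -- difference bound after one step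
    have hgDbd : ∀ i, |g₁ i - g₂ i| ≤ (r + 1) * B * (D + δ * M₀) := by
      intro i
      have h1 : |g₁ i - g₂ i| ≤
          |((∑ j, p₁.1 i j * h₁ j) + p₁.2 i) - ((∑ j, p₂.1 i j * h₂ j) + p₂.2 i)| :=
        lrelu_lip hν0 hν1 _ _
      have h2 : |((∑ j, p₁.1 i j * h₁ j) + p₁.2 i) - ((∑ j, p₂.1 i j * h₂ j) + p₂.2 i)| ≤
          r * (δ * (B * M₀) + B * D) + δ :=
        affine_diff_le _ _ _ _ _ _ _ _ _ _ hδ hBpos (hpc.1 i) (hp₂.1 i) (hpc.2 i) hh₁ hhD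
      have h3 : (r : ℝ) * (δ * (B * M₀) + B * D) + δ ≤ (r + 1) * B * (D + δ * M₀) := by
        nlinarith [mul_nonneg hBpos hD, mul_nonneg hδ (sub_nonneg.mpr hBM),
          mul_nonneg (mul_nonneg (Nat.cast_nonneg r : (0:ℝ) ≤ r) hBpos) hD]
      linarith
    have hM₀' : (1 : ℝ) ≤ (r + 1) * B * M₀ := by nlinarith
    have hD' : (0 : ℝ) ≤ (r + 1) * B * (D + δ * M₀) := by
      have : (0:ℝ) ≤ D + δ * M₀ := by nlinarith
      positivity
    have IH := ih t₂ hlen' (fun p hp => hb₁ p (List.mem_cons_of_mem _ hp))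
      (fun p hp => hb₂ p (List.mem_cons_of_mem _ hp))
      (fun p hp => hc p (by rw [List.zip_cons_cons]; exact List.mem_cons_of_mem _ hp))
      ((r + 1) * B * M₀) ((r + 1) * B * (D + δ * M₀)) hM₀' hD' g₁ g₂ hg₁bd hgDbd
    constructor
    · intro i
      calc |((p₁ :: t₁).foldl (lstep ν) h₁) i| = |(t₁.foldl (lstep ν) g₁) i| := by
            rw [List.foldl_cons]
        _ ≤ ((r + 1) * B) ^ t₁.length * (B * ((r + 1) * B * M₀)) := IH.1 i
        _ = ((r + 1) * B) ^ (p₁ :: t₁).length * (B * M₀) := by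
            rw [List.length_cons, pow_succ]; ring
    · intro i
      calc |((p₁ :: t₁).foldl (lstep ν) h₁) i - ((p₂ :: t₂).foldl (lstep ν) h₂) i|
          = |(t₁.foldl (lstep ν) g₁) i - (t₂.foldl (lstep ν) g₂) i| := by
            rw [List.foldl_cons, List.foldl_cons]
        _ ≤ ((r + 1) * B) ^ t₁.length *
              ((r + 1) * B * (D + δ * M₀) + t₁.length * δ * ((r + 1) * B * M₀)) := IH.2 i
        _ = ((r + 1) * B) ^ (p₁ :: t₁).length * (D + (p₁ :: t₁).length * δ * M₀) := by
            rw [List.length_cons, pow_succ]; push_cast; ring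


set_option maxHeartbeats 1000000

/-- Lipschitz dependence of a Leaky-ReLU network on its parameters.  If two
networks with the same architecture `(L, (d, r, …, r, 1))` have parameters bounded by `B`
and entrywise at distance at most `δ`, then the network functions differ by at most
`a(d+1)(r+1)^L B^L (L+1) δ` in sup-norm on `[−a,a]^d`. -/
theorem dnn_lipschitz_in_parameters
    (a : ℝ) (ha : 1 ≤ a) (d r L : ℕ) (ν B δ : ℝ)
    (hν0 : 0 ≤ ν) (hν1 : ν < 1) (hB : 1 ≤ B) (hδ : 0 < δ)
    (n₁ n₂ : LNet d r)
    (hL₁ : n₁.hid.length + 1 = L) (hL₂ : n₂.hid.length + 1 = L)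
    (hb₁ : n₁.bounded B) (hb₂ : n₂.bounded B) (hclose : n₁.close n₂ δ) :
    ∀ x ∈ cube a d,
      |n₁.eval ν x - n₂.eval ν x| ≤
        a * (d + 1) * (r + 1) ^ L * B ^ L * (L + 1) * δ := by
  intro x hx
  obtain ⟨hW0₁, hb0₁, hhid₁, hWout₁, hbout₁⟩ := hb₁
  obtain ⟨hW0₂, hb0₂, hhid₂, hWout₂, hbout₂⟩ := hb₂
  obtain ⟨hcW0, hcb0, hchid, hcWout, hcbout⟩ := hclose
  have hδ' : (0:ℝ) ≤ δ := le_of_lt hδ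
  have hν1' : ν ≤ 1 := le_of_lt hν1
  have hBpos : (0:ℝ) ≤ B := by linarith
  have hd0 : (0:ℝ) ≤ (d:ℝ) := Nat.cast_nonneg d
  have hr0 : (0:ℝ) ≤ (r:ℝ) := Nat.cast_nonneg r
  have hxabs : ∀ j, |x j| ≤ a := fun j => abs_le.mpr ⟨(hx j).1, (hx j).2⟩
  set u₁ : Fin r → ℝ := fun i => lrelu ν ((∑ j, n₁.W0 i j * x j) + n₁.b0 i) with hu₁
  set u₂ : Fin r → ℝ := fun i => lrelu ν ((∑ j, n₂.W0 i j * x j) + n₂.b0 i) with hu₂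
  have hM₀ : (1:ℝ) ≤ a * ((d:ℝ) + 1) := by nlinarith
  have hu₁bd : ∀ i, |u₁ i| ≤ B * (a * ((d:ℝ) + 1)) := by
    intro i
    have h1 : |u₁ i| ≤ |(∑ j, n₁.W0 i j * x j) + n₁.b0 i| := lrelu_abs_le hν0 hν1' _
    have h2 : |(∑ j, n₁.W0 i j * x j) + n₁.b0 i| ≤ d * (B * a) + B :=
      affine_abs_le _ _ _ _ _ hBpos (hW0₁ i) (hb0₁ i) hxabs
    have h3 : (d:ℝ) * (B * a) + B ≤ B * (a * ((d:ℝ) + 1)) := by nlinarith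
    linarith
  have huD : ∀ i, |u₁ i - u₂ i| ≤ a * ((d:ℝ) + 1) * δ := by
    intro i
    have h1 : |u₁ i - u₂ i| ≤
        |((∑ j, n₁.W0 i j * x j) + n₁.b0 i) - ((∑ j, n₂.W0 i j * x j) + n₂.b0 i)| :=
      lrelu_lip hν0 hν1' _ _
    have h2 : |((∑ j, n₁.W0 i j * x j) + n₁.b0 i) - ((∑ j, n₂.W0 i j * x j) + n₂.b0 i)| ≤
        d * (δ * a + B * 0) + δ :=
      affine_diff_le _ _ x x _ _ B δ a 0 hδ' hBpos (hcW0 i) (hW0₂ i) (hcb0 i) hxabs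
        (fun j => by simp)
    have h3 : (d:ℝ) * (δ * a + B * 0) + δ ≤ a * ((d:ℝ) + 1) * δ := by nlinarith
    linarith
  have hDnn : (0:ℝ) ≤ a * ((d:ℝ) + 1) * δ := by nlinarith
  have hlen : n₁.hid.length = n₂.hid.length := by omega
  have FB := fold_bound ν B δ hν0 hν1' hB hδ' n₁.hid n₂.hid hlen hhid₁ hhid₂ hchid
    (a * ((d:ℝ) + 1)) (a * ((d:ℝ) + 1) * δ) hM₀ hDnn u₁ u₂ hu₁bd huD
  have e₁ : n₁.eval ν x = (∑ i, n₁.Wout i * (n₁.hid.foldl (lstep ν) u₁) i) + n₁.bout := rfl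
  have e₂ : n₂.eval ν x = (∑ i, n₂.Wout i * (n₂.hid.foldl (lstep ν) u₂) i) + n₂.bout := rfl
  rw [e₁, e₂]
  have hfin := affine_diff_le n₁.Wout n₂.Wout (n₁.hid.foldl (lstep ν) u₁)
    (n₂.hid.foldl (lstep ν) u₂) n₁.bout n₂.bout B δ
    ((((r:ℝ) + 1) * B) ^ n₁.hid.length * (B * (a * ((d:ℝ) + 1))))
    ((((r:ℝ) + 1) * B) ^ n₁.hid.length *
      (a * ((d:ℝ) + 1) * δ + n₁.hid.length * δ * (a * ((d:ℝ) + 1))))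
    hδ' hBpos hcWout hWout₂ hcbout FB.1 FB.2
  refine hfin.trans ?_
  subst hL₁
  set n := n₁.hid.length with hn
  have hC1 : (1:ℝ) ≤ ((r:ℝ) + 1) * B := by nlinarith
  have hCn : (1:ℝ) ≤ (((r:ℝ) + 1) * B) ^ n := one_le_pow₀ hC1
  have hK : (1:ℝ) ≤ (((r:ℝ) + 1) * B) ^ n * (a * ((d:ℝ) + 1)) := by nlinarith
  have hn0 : (0:ℝ) ≤ (n:ℝ) := Nat.cast_nonneg n
  calc (r:ℝ) * (δ * ((((r:ℝ) + 1) * B) ^ n * (B * (a * ((d:ℝ) + 1)))) +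
          B * ((((r:ℝ) + 1) * B) ^ n *
            (a * ((d:ℝ) + 1) * δ + (n:ℝ) * δ * (a * ((d:ℝ) + 1))))) + δ
      = (r:ℝ) * B * ((((r:ℝ) + 1) * B) ^ n * (a * ((d:ℝ) + 1))) * ((n:ℝ) + 2) * δ + δ := by
        ring
    _ ≤ ((r:ℝ) + 1) * B * ((((r:ℝ) + 1) * B) ^ n * (a * ((d:ℝ) + 1))) * ((n:ℝ) + 2) * δ := by
        have h1 : (1:ℝ) ≤ B * ((((r:ℝ) + 1) * B) ^ n * (a * ((d:ℝ) + 1))) := by nlinarith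
        nlinarith [mul_nonneg hδ' (mul_nonneg (sub_nonneg.2 h1)
          (by linarith : (0:ℝ) ≤ (n:ℝ) + 2)), mul_nonneg hδ' hn0]
    _ = a * ((d:ℝ) + 1) * ((r:ℝ) + 1) ^ (n + 1) * B ^ (n + 1) * (((n:ℕ) + 1 : ℕ) + 1) * δ := by
        rw [mul_pow]
        push_cast
        ring
end
end
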